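/- arXiv:2103.09594 — 6 statements merged into one kernel-verified Lean document; each statement's English description precedes it below -/
import Mathlib

section
/- Let (a_n)_{n≥1} be a sequence of complex numbers and (X_n)_{n≥1} a sequence of complex-valued random variables with E(|X_n|^2) = 1 for all n. For any integer N > 0, let S_N* = max_{1 ≤ j ≤ N} |Σ_{n=1}^j a_n X_n|. Then E( (S_N*)² ) ≤ (2 + log₂ N)² · Σ_{n,m=1}^N |a_n| |a_m| |E(X_n · conj(X_m))|. -/
/-!
Chaining over dyadic scales. Let `L = ⌊log₂ N⌋ + 1`, so that `N < 2^L`. For `j ≤ N` the partial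
sum `S_j` telescopes along the truncations `j_k = 2^k ⌊j / 2^k⌋` (`j_0 = j`, `j_L = 0`), and each
increment `S_{j_k} - S_{j_{k+1}}` is either zero or the sum over a single dyadic block of level
`k`. Cauchy–Schwarz over the `L` levels bounds `(S_N^*)²` pointwise, uniformly in `j`, by `L` times
the sum of the squared block sums over all blocks. Expanding the square, the second moment of a
block sum is at most `∑ |a_n| |a_m| |E(X_n conj X_m)|` over the block, and the blocks of one level
are disjoint subsets of `[1, N]`, so every level contributes at most the full double sum. This
gives `L²` times that sum, and `L ≤ 2 + log₂ N`.
-/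

open MeasureTheory Finset Function
open scoped ComplexConjugate

lemma norm_sum_sq_le_card_mul_sum_norm_sq {ι E : Type*} [SeminormedAddCommGroup E]
    (s : Finset ι) (z : ι → E) : ‖∑ i ∈ s, z i‖ ^ 2 ≤ #s * ∑ i ∈ s, ‖z i‖ ^ 2 :=
  (pow_le_pow_left₀ (norm_nonneg _) (norm_sum_le s z) 2).trans sq_sum_le_card_mul_sum_sq

lemma RCLike.norm_sum_sq_eq_re_sum_sum_mul_conj {ι 𝕜 : Type*} [RCLike 𝕜] (s : Finset ι)
    (z : ι → 𝕜) : ‖∑ i ∈ s, z i‖ ^ 2 = re (∑ i ∈ s, ∑ j ∈ s, z i * conj (z j)) := by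
  rw [← sum_mul_sum, ← map_sum, RCLike.mul_conj, ← RCLike.ofReal_pow, RCLike.ofReal_re]

lemma memLp_two_of_integral_norm_sq_ne_zero {Ω E : Type*} [MeasurableSpace Ω] {μ : Measure Ω}
    [NormedAddCommGroup E] {f : Ω → E} (hf : AEStronglyMeasurable f μ)
    (h : ∫ ω, ‖f ω‖ ^ 2 ∂μ ≠ 0) : MemLp f 2 μ :=
  (memLp_two_iff_integrable_sq_norm hf).2 (not_imp_comm.1 integral_undef h)

section SecondMoment

variable {ι 𝕜 Ω : Type*} [RCLike 𝕜] [MeasurableSpace Ω] {μ : Measure Ω} {s : Finset ι}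

lemma integral_norm_sum_sq_eq_re {f : ι → Ω → 𝕜} (hf : ∀ i ∈ s, MemLp (f i) 2 μ) :
    ∫ ω, ‖∑ i ∈ s, f i ω‖ ^ 2 ∂μ =
      RCLike.re (∑ i ∈ s, ∑ j ∈ s, ∫ ω, f i ω * conj (f j ω) ∂μ) := by
  have hint : ∀ i ∈ s, ∀ j ∈ s, Integrable (fun ω => f i ω * conj (f j ω)) μ :=
    fun i hi j hj => (hf i hi).integrable_mul (hf j hj).star
  simp_rw [RCLike.norm_sum_sq_eq_re_sum_sum_mul_conj]
  rw [integral_re (integrable_finsetSum _ fun i hi => integrable_finsetSum _ (hint i hi)),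
    integral_finsetSum _ fun i hi => integrable_finsetSum _ (hint i hi)]
  exact congrArg _ (sum_congr rfl fun i hi => integral_finsetSum _ (hint i hi))

lemma integral_norm_sum_mul_sq_le {a : ι → 𝕜} {X : ι → Ω → 𝕜}
    (hX : ∀ i ∈ s, MemLp (X i) 2 μ) :
    ∫ ω, ‖∑ i ∈ s, a i * X i ω‖ ^ 2 ∂μ ≤
      ∑ i ∈ s, ∑ j ∈ s, ‖a i‖ * ‖a j‖ * ‖∫ ω, X i ω * conj (X j ω) ∂μ‖ := by
  rw [integral_norm_sum_sq_eq_re fun i hi => (hX i hi).const_mul (a i)]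
  refine (RCLike.re_le_norm _).trans <| (norm_sum_le _ _).trans <|
    sum_le_sum fun i _ => (norm_sum_le _ _).trans <| sum_le_sum fun j _ => le_of_eq ?_
  have h : ∀ ω, a i * X i ω * conj (a j * X j ω) = a i * conj (a j) * (X i ω * conj (X j ω)) :=
    fun ω => by rw [map_mul]; ring
  simp only [h, integral_const_mul, norm_mul, RCLike.norm_conj]

end SecondMoment

lemma sum_sum_sum_le_of_pairwiseDisjoint {ι α : Type*} {t : Finset ι} {s : Finset α}
    {I : ι → Finset α} (hI : (t : Set ι).PairwiseDisjoint I) (hsub : ∀ q ∈ t, I q ⊆ s)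
    {w : α → α → ℝ} (hw : ∀ n ∈ s, ∀ m ∈ s, 0 ≤ w n m) :
    ∑ q ∈ t, ∑ n ∈ I q, ∑ m ∈ I q, w n m ≤ ∑ n ∈ s, ∑ m ∈ s, w n m := by
  classical
  calc ∑ q ∈ t, ∑ n ∈ I q, ∑ m ∈ I q, w n m
      ≤ ∑ q ∈ t, ∑ n ∈ I q, ∑ m ∈ s, w n m :=
        sum_le_sum fun q hq => sum_le_sum fun n hn =>
          sum_le_sum_of_subset_of_nonneg (hsub q hq) fun m hm _ => hw n (hsub q hq hn) m hm
    _ = ∑ n ∈ t.biUnion I, ∑ m ∈ s, w n m := (sum_biUnion hI).symm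
    _ ≤ ∑ n ∈ s, ∑ m ∈ s, w n m :=
        sum_le_sum_of_subset_of_nonneg (biUnion_subset.2 hsub) fun n hn _ =>
          sum_nonneg (hw n hn)

def dyadicFloor (k j : ℕ) : ℕ := 2 ^ k * (j / 2 ^ k)

/-- The blocks on which two consecutive dyadic truncations of an index `j ≤ N` can differ. -/
def dyadicBlock (N k q : ℕ) : Finset ℕ := Ioc (2 ^ (k + 1) * q) (min (2 ^ (k + 1) * q + 2 ^ k) N)

lemma dyadicFloor_le (k j : ℕ) : dyadicFloor k j ≤ j := Nat.mul_div_le j _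

lemma dyadicFloor_eq_zero_of_lt {k j : ℕ} (h : j < 2 ^ k) : dyadicFloor k j = 0 := by
  simp [dyadicFloor, Nat.div_eq_of_lt h]

lemma dyadicFloor_eq_dyadicFloor_succ_or (k j : ℕ) :
    dyadicFloor k j = dyadicFloor (k + 1) j ∨ dyadicFloor k j = dyadicFloor (k + 1) j + 2 ^ k := by
  have hu : j / 2 ^ (k + 1) = j / 2 ^ k / 2 := by rw [pow_succ, Nat.div_div_eq_div_mul]
  simp only [dyadicFloor]
  rw [hu, pow_succ]
  set u := j / 2 ^ k
  rcases Nat.mod_two_eq_zero_or_one u with h | h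
  · left
    conv_lhs => rw [← Nat.div_add_mod u 2, h]
    ring
  · right
    conv_lhs => rw [← Nat.div_add_mod u 2, h]
    ring

lemma dyadicFloor_succ_le (k j : ℕ) : dyadicFloor (k + 1) j ≤ dyadicFloor k j := by
  rcases dyadicFloor_eq_dyadicFloor_succ_or k j with h | h <;> simp [h]

lemma Ioc_dyadicFloor_eq_empty_or_dyadicBlock {N j : ℕ} (hj : j ≤ N) (k : ℕ) :
    Ioc (dyadicFloor (k + 1) j) (dyadicFloor k j) = ∅ ∨
      ∃ q < N, Ioc (dyadicFloor (k + 1) j) (dyadicFloor k j) = dyadicBlock N k q := by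
  rcases dyadicFloor_eq_dyadicFloor_succ_or k j with h | h
  · exact Or.inl (by simp [h])
  · refine Or.inr ⟨j / 2 ^ (k + 1), ?_, ?_⟩
    · have hq : j / 2 ^ (k + 1) ≤ dyadicFloor (k + 1) j := Nat.le_mul_of_pos_left _ (by positivity)
      have hj' := dyadicFloor_le k j
      have hpos := Nat.one_le_two_pow (n := k)
      omega
    · have hj' := dyadicFloor_le k j
      rw [dyadicBlock, ← dyadicFloor, ← h, min_eq_left (by omega)]

lemma sum_Ioc_dyadicFloor_eq_sum_range {M : Type*} [AddCommMonoid M] (b : ℕ → M) (j L : ℕ) :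
    ∑ n ∈ Ioc (dyadicFloor L j) j, b n =
      ∑ k ∈ range L, ∑ n ∈ Ioc (dyadicFloor (k + 1) j) (dyadicFloor k j), b n := by
  induction L with
  | zero => simp [dyadicFloor]
  | succ L ih =>
    rw [sum_range_succ, ← ih,
      ← sum_Ioc_consecutive _ (dyadicFloor_succ_le L j) (dyadicFloor_le L j), add_comm]

lemma dyadicBlock_subset_Icc (N k q : ℕ) : dyadicBlock N k q ⊆ Icc 1 N := by
  intro n hn
  simp only [dyadicBlock, mem_Ioc, le_min_iff] at hn
  exact mem_Icc.2 ⟨by omega, hn.2.2⟩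

lemma pairwise_disjoint_dyadicBlock (N k : ℕ) : Pairwise (Disjoint on (dyadicBlock N k)) := by
  have index_eq : ∀ q n, n ∈ dyadicBlock N k q → (n - 1) / 2 ^ (k + 1) = q := by
    intro q n hn
    simp only [dyadicBlock, mem_Ioc, le_min_iff] at hn
    have hk : 2 ^ k < 2 ^ (k + 1) := Nat.pow_lt_pow_right (by norm_num) (by omega)
    exact Nat.div_eq_of_lt_le (by rw [mul_comm]; omega) (by rw [add_mul, one_mul, mul_comm]; omega)
  intro q q' hqq'
  rw [Function.onFun_apply, disjoint_left]
  exact fun n hn hn' => hqq' ((index_eq q n hn).symm.trans (index_eq q' n hn'))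

lemma norm_sum_Ioc_sq_le_sum_dyadicBlock {E : Type*} [SeminormedAddCommGroup E] (b : ℕ → E)
    {N L j : ℕ} (hL : N < 2 ^ L) (hj : j ≤ N) :
    ‖∑ n ∈ Ioc 0 j, b n‖ ^ 2 ≤
      L * ∑ k ∈ range L, ∑ q ∈ range N, ‖∑ n ∈ dyadicBlock N k q, b n‖ ^ 2 := by
  rw [← dyadicFloor_eq_zero_of_lt (hj.trans_lt hL), sum_Ioc_dyadicFloor_eq_sum_range]
  refine (norm_sum_sq_le_card_mul_sum_norm_sq _ _).trans ?_
  rw [card_range]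
  gcongr with k
  rcases Ioc_dyadicFloor_eq_empty_or_dyadicBlock hj k with h | ⟨q, hq, h⟩
  · rw [h, sum_empty, norm_zero, sq, zero_mul]
    positivity
  · rw [h]
    exact single_le_sum (f := fun q => ‖∑ n ∈ dyadicBlock N k q, b n‖ ^ 2)
      (fun _ _ => by positivity) (mem_range.2 hq)

lemma sq_sup'_norm_sum_Icc_le_sum_dyadicBlock {E : Type*} [SeminormedAddCommGroup E] (b : ℕ → E)
    {N L : ℕ} (hN : (Icc 1 N).Nonempty) (hL : N < 2 ^ L) :
    ((Icc 1 N).sup' hN fun j => ‖∑ n ∈ Icc 1 j, b n‖) ^ 2 ≤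
      L * ∑ k ∈ range L, ∑ q ∈ range N, ‖∑ n ∈ dyadicBlock N k q, b n‖ ^ 2 := by
  obtain ⟨j, hj, hmax⟩ := exists_mem_eq_sup' hN fun j => ‖∑ n ∈ Icc 1 j, b n‖
  rw [hmax, show Icc 1 j = Ioc 0 j from Icc_add_one_left_eq_Ioc 0 j]
  exact norm_sum_Ioc_sq_le_sum_dyadicBlock b hL (mem_Icc.1 hj).2

lemma sum_integral_norm_sum_dyadicBlock_sq_le {𝕜 Ω : Type*} [RCLike 𝕜] [MeasurableSpace Ω]
    {μ : Measure Ω} {a : ℕ → 𝕜} {X : ℕ → Ω → 𝕜} {N : ℕ}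
    (hX : ∀ n ∈ Icc 1 N, MemLp (X n) 2 μ) (k : ℕ) :
    ∑ q ∈ range N, ∫ ω, ‖∑ n ∈ dyadicBlock N k q, a n * X n ω‖ ^ 2 ∂μ ≤
      ∑ n ∈ Icc 1 N, ∑ m ∈ Icc 1 N, ‖a n‖ * ‖a m‖ * ‖∫ ω, X n ω * conj (X m ω) ∂μ‖ :=
  (sum_le_sum fun q _ => integral_norm_sum_mul_sq_le fun n hn =>
      hX n (dyadicBlock_subset_Icc N k q hn)).trans <|
    sum_sum_sum_le_of_pairwiseDisjoint
      ((pairwise_disjoint_dyadicBlock N k).set_pairwise _)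
      (fun q _ => dyadicBlock_subset_Icc N k q) fun _ _ _ _ => by positivity

/-- **Menshov–Rademacher maximal inequality.** For `S_N* = max_{1 ≤ j ≤ N} |Σ_{n=1}^j a_n X_n|`,
`E((S_N*)²) ≤ (2 + log₂ N)² Σ_{n,m=1}^N |a_n||a_m||E(X_n conj(X_m))|`. -/
theorem menshov_rademacher_maximal_inequality
    {Ω : Type*} [MeasurableSpace Ω] (P : Measure Ω) [IsProbabilityMeasure P]
    (a : ℕ → ℂ) (X : ℕ → Ω → ℂ)
    (hmeas : ∀ n, 1 ≤ n → AEMeasurable (X n) P)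
    (hnorm : ∀ n, 1 ≤ n → ∫ ω, ‖X n ω‖ ^ 2 ∂P = 1)
    (N : ℕ) (hN : 0 < N) :
    ∫⁻ ω, ENNReal.ofReal
        (((Finset.Icc 1 N).sup' (Finset.nonempty_Icc.mpr hN)
          (fun j => ‖∑ n ∈ Finset.Icc 1 j, a n * X n ω‖)) ^ 2) ∂P ≤
      ENNReal.ofReal ((2 + Real.logb 2 N) ^ 2 *
        ∑ n ∈ Finset.Icc 1 N, ∑ m ∈ Finset.Icc 1 N,
          ‖a n‖ * ‖a m‖ * ‖∫ ω, X n ω * (starRingEnd ℂ) (X m ω) ∂P‖) := by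
  have hL2 : ∀ n ∈ Icc 1 N, MemLp (X n) 2 P := fun n hn =>
    memLp_two_of_integral_norm_sq_ne_zero (hmeas n (mem_Icc.1 hn).1).aestronglyMeasurable
      (by rw [hnorm n (mem_Icc.1 hn).1]; exact one_ne_zero)
  set L := Nat.log 2 N + 1
  set W := ∑ n ∈ Icc 1 N, ∑ m ∈ Icc 1 N, ‖a n‖ * ‖a m‖ * ‖∫ ω, X n ω * conj (X m ω) ∂P‖
  set B : ℕ → ℕ → Ω → ℝ := fun k q ω => ‖∑ n ∈ dyadicBlock N k q, a n * X n ω‖ ^ 2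
  have hB : ∀ k q, Integrable (B k q) P := fun k q =>
    (memLp_finsetSum _ fun n hn => (hL2 n (dyadicBlock_subset_Icc N k q hn)).const_mul (a n)
      ).integrable_norm_pow two_ne_zero
  have hsumB : Integrable (fun ω => ∑ k ∈ range L, ∑ q ∈ range N, B k q ω) P :=
    integrable_finsetSum _ fun k _ => integrable_finsetSum _ fun q _ => hB k q
  have hL : (L : ℝ) ≤ 2 + Real.logb 2 N := by
    have h := Real.natLog_le_logb N 2
    norm_num [L] at h ⊢
    linarith
  have hW : 0 ≤ W := by positivity
  calc _ ≤ ∫⁻ ω, ENNReal.ofReal (L * ∑ k ∈ range L, ∑ q ∈ range N, B k q ω) ∂P :=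
        lintegral_mono fun ω => ENNReal.ofReal_le_ofReal <|
          sq_sup'_norm_sum_Icc_le_sum_dyadicBlock _ _ (Nat.lt_pow_succ_log_self one_lt_two N)
    _ = ENNReal.ofReal (L * ∑ k ∈ range L, ∑ q ∈ range N, ∫ ω, B k q ω ∂P) := by
        rw [← ofReal_integral_eq_lintegral_ofReal (hsumB.const_mul _)
          (ae_of_all _ fun ω => by positivity), integral_const_mul,
          integral_finsetSum _ fun k _ => integrable_finsetSum _ fun q _ => hB k q]
        simp_rw [integral_finsetSum _ fun q _ => hB _ q]
    _ ≤ ENNReal.ofReal (L * (L * W)) := by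
        gcongr
        exact (sum_le_sum fun k _ => sum_integral_norm_sum_dyadicBlock_sq_le hL2 k).trans
          (by simp [W])
    _ ≤ _ := by
        rw [← mul_assoc, ← sq]
        gcongr
end

section
/- Let (a_n)_{n≥1} be a sequence of complex numbers and (X_n)_{n≥1} a sequence of real-valued random variables such that E(X_n²) = 1 for all n and E(X_n X_m) ≤ 0 for all n ≠ m. If Σ_{n=1}^∞ |a_n|² · log₂²(n+1) < ∞, then the series Σ_{n=1}^∞ a_n X_n converges almost surely. -/
/-!
Splitting `a n` into real and imaginary parts, and these into positive and negative parts,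
reduces the claim to nonnegative real coefficients `b`. For those, negative correlation gives
`E (∑_{n ∈ I} b n X n)² ≤ ∑_{n ∈ I} b n²`, so the increments of the partial sums `S` have second
moments bounded by an additive weight. The Rademacher–Menshov argument then applies: bisecting,
`(S k - S a)² ≤ (m + 1) F` for `a ≤ k ≤ a + 2 ^ m`, where `F` is the sum of the squared increments
of `S` over all dyadic subintervals of `[a, a + 2 ^ m]`, and `E F ≤ (m + 1) ∑_{a < n ≤ a + 2 ^ m} b n²`. The weight `log₂² (n + 1)` makes both
`∑ₚ (p + 1)² (S (2 ^ (p + 1)) - S (2 ^ p))²` and `∑ₚ (p + 1) Fₚ` integrable, hence finite almost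
surely: the first gives convergence along `2 ^ p`, the second bounds the oscillation of `S`
between consecutive powers of two.
-/

open MeasureTheory Filter Finset Topology

/-- The sum of `(S (a + (i + 1) 2 ^ j) - S (a + i 2 ^ j)) ^ 2` over `j ≤ m` and `i < 2 ^ (m - j)`,
i.e. over all dyadic subintervals of `[a, a + 2 ^ m]`. -/
noncomputable def dyadicSquareSum (S : ℕ → ℝ) : ℕ → ℕ → ℝ
  | 0, a => (S (a + 1) - S a) ^ 2
  | m + 1, a => (S (a + 2 ^ (m + 1)) - S a) ^ 2 + dyadicSquareSum S m a +
      dyadicSquareSum S m (a + 2 ^ m)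

lemma dyadicSquareSum_nonneg (S : ℕ → ℝ) (m a : ℕ) : 0 ≤ dyadicSquareSum S m a := by
  induction m generalizing a with
  | zero => exact sq_nonneg _
  | succ m ih => exact add_nonneg (add_nonneg (sq_nonneg _) (ih a)) (ih _)

lemma sq_sub_le_dyadicSquareSum (S : ℕ → ℝ) (m a : ℕ) :
    (S (a + 2 ^ m) - S a) ^ 2 ≤ dyadicSquareSum S m a := by
  cases m with
  | zero => simp [dyadicSquareSum]
  | succ m =>
    simp only [dyadicSquareSum]
    linarith [dyadicSquareSum_nonneg S m a, dyadicSquareSum_nonneg S m (a + 2 ^ m)]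

lemma sq_sub_le_mul_dyadicSquareSum (S : ℕ → ℝ) {m a k : ℕ} (hak : a ≤ k) (hk : k ≤ a + 2 ^ m) :
    (S k - S a) ^ 2 ≤ (m + 1) * dyadicSquareSum S m a := by
  induction m generalizing a k with
  | zero =>
    obtain rfl | rfl : k = a ∨ k = a + 1 := by omega
    · simp [dyadicSquareSum_nonneg]
    · simp [dyadicSquareSum]
  | succ m ih =>
    have hF := dyadicSquareSum_nonneg S m
    have hsucc : dyadicSquareSum S (m + 1) a =
        (S (a + 2 ^ (m + 1)) - S a) ^ 2 + dyadicSquareSum S m a +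
          dyadicSquareSum S m (a + 2 ^ m) := rfl
    push_cast
    rw [hsucc]
    by_cases hkm : k ≤ a + 2 ^ m
    · nlinarith [ih hak hkm, hF a, hF (a + 2 ^ m), sq_nonneg (S (a + 2 ^ (m + 1)) - S a)]
    · -- split at the midpoint; `(x + y)² ≤ (m + 2) x² + (m + 2) / (m + 1) y²`
      have hx := sq_sub_le_dyadicSquareSum S m a
      have hy := ih (a := a + 2 ^ m) (k := k) (by omega) (by rw [pow_succ] at hk; omega)
      have hsplit : S k - S a = (S (a + 2 ^ m) - S a) + (S k - S (a + 2 ^ m)) := by ring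
      rw [hsplit]
      set x := S (a + 2 ^ m) - S a
      set y := S k - S (a + 2 ^ m)
      have key : ((m : ℝ) + 1) * (x + y) ^ 2 ≤ ((m : ℝ) + 1) * ((m + 1 + 1) *
          (dyadicSquareSum S m a + dyadicSquareSum S m (a + 2 ^ m))) := by
        nlinarith [sq_nonneg ((m + 1) * x - y), mul_le_mul_of_nonneg_left hx
          (by positivity : (0 : ℝ) ≤ (m + 1) * (m + 1 + 1)),
          mul_le_mul_of_nonneg_left hy (by positivity : (0 : ℝ) ≤ m + 1 + 1)]
      nlinarith [le_of_mul_le_mul_left key (by positivity : (0 : ℝ) < m + 1),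
        sq_nonneg (S (a + 2 ^ (m + 1)) - S a)]

lemma summable_abs_of_summable_sq_mul {x : ℕ → ℝ}
    (h : Summable fun p : ℕ => ((p : ℝ) + 1) ^ 2 * x p ^ 2) : Summable fun p => |x p| := by
  have hinv : Summable fun p : ℕ => 1 / ((p : ℝ) + 1) ^ 2 := by
    simpa using (summable_nat_add_iff 1).2 (Real.summable_one_div_nat_pow.2 one_lt_two)
  refine Summable.of_nonneg_of_le (fun p => abs_nonneg _) (fun p => ?_) ((h.add hinv).div_const 2)
  rw [le_div_iff₀ two_pos, ← sq_abs (x p)]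
  have : 0 ≤ (((p : ℝ) + 1) * |x p| - 1 / (p + 1)) ^ 2 := sq_nonneg _
  field_simp at this ⊢
  nlinarith

lemma tendsto_of_tendsto_two_pow {S g : ℕ → ℝ} {L : ℝ}
    (hsub : Tendsto (fun p => S (2 ^ p)) atTop (𝓝 L)) (hg : Tendsto g atTop (𝓝 0))
    (hosc : ∀ p N, 2 ^ p ≤ N → N < 2 ^ (p + 1) → |S N - S (2 ^ p)| ≤ g p) :
    Tendsto S atTop (𝓝 L) := by
  have hlog : Tendsto (Nat.log 2) atTop atTop :=
    tendsto_atTop_atTop.2 fun p => ⟨2 ^ p, fun N hN => Nat.le_log_of_pow_le one_lt_two hN⟩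
  have hosc' : ∀ᶠ N in atTop, ‖S N - S (2 ^ Nat.log 2 N)‖ ≤ g (Nat.log 2 N) :=
    eventually_atTop.2 ⟨1, fun N hN => hosc _ _ (Nat.pow_log_le_self 2 (by omega))
      (Nat.lt_pow_succ_log_self one_lt_two N)⟩
  simpa using (hsub.comp hlog).add (squeeze_zero_norm' hosc' (hg.comp hlog))

lemma exists_tendsto_of_summable_dyadic {S : ℕ → ℝ}
    (hD : Summable fun p : ℕ => ((p : ℝ) + 1) ^ 2 * (S (2 ^ (p + 1)) - S (2 ^ p)) ^ 2)
    (hF : Summable fun p : ℕ => ((p : ℝ) + 1) * dyadicSquareSum S p (2 ^ p)) :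
    ∃ L, Tendsto S atTop (𝓝 L) := by
  obtain ⟨L, hL⟩ : ∃ L, Tendsto (fun p => S (2 ^ p)) atTop (𝓝 L) := by
    have hsum := (summable_abs_of_summable_sq_mul hD).of_abs
    refine ⟨S 1 + ∑' p, (S (2 ^ (p + 1)) - S (2 ^ p)), ?_⟩
    simpa [Finset.sum_range_sub (fun p => S (2 ^ p))] using
      (tendsto_const_nhds (x := S 1)).add hsum.hasSum.tendsto_sum_nat
  refine ⟨L, tendsto_of_tendsto_two_pow hL (by simpa using hF.tendsto_atTop_zero.sqrt)
    fun p N h₁ h₂ => Real.abs_le_sqrt ?_⟩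
  exact sq_sub_le_mul_dyadicSquareSum S h₁ (by rw [pow_succ] at h₂; omega)

lemma sum_range_sum_Ioc_of_monotone {M : Type*} [AddCommMonoid M] (f : ℕ → M) {c : ℕ → ℕ}
    (hc : Monotone c) (Q : ℕ) :
    ∑ i ∈ range Q, ∑ n ∈ Ioc (c i) (c (i + 1)), f n = ∑ n ∈ Ioc (c 0) (c Q), f n := by
  induction Q with
  | zero => simp
  | succ Q ih =>
    rw [sum_range_succ, ih, sum_Ioc_consecutive _ (hc (Nat.zero_le Q)) (hc Q.le_succ)]

lemma add_one_le_two_mul_logb_add_one {p n : ℕ} (hn : 2 ^ p ≤ n) :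
    (p : ℝ) + 1 ≤ 2 * Real.logb 2 (n + 1) := by
  have hn' : (2 : ℝ) ^ p ≤ n := by exact_mod_cast hn
  calc (p : ℝ) + 1 = Real.logb 2 (2 ^ (p + 1)) := by simp [Real.logb_pow]
    _ ≤ Real.logb 2 ((n + 1) ^ 2) := by
      refine Real.logb_le_logb_of_le one_lt_two (by positivity) ?_
      rw [pow_succ]
      nlinarith
    _ = 2 * Real.logb 2 (n + 1) := by simp [Real.logb_pow]

lemma summable_sq_mul_sum_Ioc_two_pow {w : ℕ → ℝ} (hw0 : ∀ n, 0 ≤ w n)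
    (hw : Summable fun n : ℕ => w n * Real.logb 2 (n + 1) ^ 2) :
    Summable fun p : ℕ => ((p : ℝ) + 1) ^ 2 * ∑ n ∈ Ioc (2 ^ p) (2 ^ (p + 1)), w n := by
  have hterm : ∀ n, 0 ≤ w n * Real.logb 2 (n + 1) ^ 2 := fun n => by have := hw0 n; positivity
  refine summable_of_sum_range_le (c := 4 * ∑' n, w n * Real.logb 2 (n + 1) ^ 2)
    (fun p => mul_nonneg (by positivity) (sum_nonneg fun n _ => hw0 n)) fun Q => ?_
  calc ∑ p ∈ range Q, ((p : ℝ) + 1) ^ 2 * ∑ n ∈ Ioc (2 ^ p) (2 ^ (p + 1)), w n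
      ≤ ∑ p ∈ range Q, ∑ n ∈ Ioc (2 ^ p) (2 ^ (p + 1)), 4 * (w n * Real.logb 2 (n + 1) ^ 2) := by
        refine sum_le_sum fun p _ => ?_
        rw [mul_sum]
        refine sum_le_sum fun n hn => ?_
        have h := add_one_le_two_mul_logb_add_one (mem_Ioc.1 hn).1.le
        have := hw0 n
        nlinarith [mul_le_mul_of_nonneg_right
          (pow_le_pow_left₀ (by positivity : (0 : ℝ) ≤ p + 1) h 2) this]
    _ = ∑ n ∈ Ioc 1 (2 ^ Q), 4 * (w n * Real.logb 2 (n + 1) ^ 2) :=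
        sum_range_sum_Ioc_of_monotone _ (pow_right_mono₀ one_le_two) Q
    _ ≤ 4 * ∑' n, w n * Real.logb 2 (n + 1) ^ 2 := by
        rw [← mul_sum]
        gcongr
        exact hw.sum_le_tsum _ fun n _ => hterm n

lemma ae_summable_of_summable_integral {α : Type*} [MeasurableSpace α] {μ : Measure α}
    {f : ℕ → α → ℝ} (hf0 : ∀ p x, 0 ≤ f p x) (hf : ∀ p, Integrable (f p) μ)
    (hsum : Summable fun p => ∫ x, f p x ∂μ) : ∀ᵐ x ∂μ, Summable fun p => f p x := by
  have hmeas : ∀ p, AEMeasurable (fun x => ENNReal.ofReal (f p x)) μ :=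
    fun p => (hf p).aemeasurable.ennreal_ofReal
  have hfin : ∫⁻ x, ∑' p, ENNReal.ofReal (f p x) ∂μ ≠ ⊤ := by
    rw [lintegral_tsum hmeas]
    simp_rw [← ofReal_integral_eq_lintegral_ofReal (hf _) (Eventually.of_forall (hf0 _))]
    rw [← ENNReal.ofReal_tsum_of_nonneg (fun p => integral_nonneg (hf0 p)) hsum]
    exact ENNReal.ofReal_ne_top
  filter_upwards [ae_lt_top' (AEMeasurable.tsum hmeas) hfin] with x hx
  simpa [ENNReal.toReal_ofReal (hf0 _ x)] using ENNReal.summable_toReal hx.ne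

section RademacherMenshov

variable {Ω : Type*} [MeasurableSpace Ω] {P : Measure Ω}

lemma integral_dyadicSquareSum_le {S : ℕ → Ω → ℝ} {w : ℕ → ℝ}
    (hS : ∀ a k, a ≤ k → Integrable (fun ω => (S k ω - S a ω) ^ 2) P ∧
      ∫ ω, (S k ω - S a ω) ^ 2 ∂P ≤ ∑ n ∈ Ioc a k, w n) (m a : ℕ) :
    Integrable (fun ω => dyadicSquareSum (S · ω) m a) P ∧
      ∫ ω, dyadicSquareSum (S · ω) m a ∂P ≤ (m + 1) * ∑ n ∈ Ioc a (a + 2 ^ m), w n := by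
  induction m generalizing a with
  | zero => simpa [dyadicSquareSum] using hS a (a + 1) (by omega)
  | succ m ih =>
    obtain ⟨h₀, h₀'⟩ := hS a (a + 2 ^ (m + 1)) (Nat.le_add_right _ _)
    obtain ⟨h₁, h₁'⟩ := ih a
    obtain ⟨h₂, h₂'⟩ := ih (a + 2 ^ m)
    have hsplit : ∑ n ∈ Ioc a (a + 2 ^ (m + 1)), w n =
        ∑ n ∈ Ioc a (a + 2 ^ m), w n + ∑ n ∈ Ioc (a + 2 ^ m) (a + 2 ^ m + 2 ^ m), w n := by
      rw [pow_succ, mul_two, ← add_assoc]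
      exact (sum_Ioc_consecutive _ (Nat.le_add_right _ _) (Nat.le_add_right _ _)).symm
    simp only [dyadicSquareSum]
    refine ⟨(h₀.fun_add h₁).fun_add h₂, ?_⟩
    rw [integral_add (h₀.fun_add h₁) h₂, integral_add h₀ h₁]
    push_cast
    rw [hsplit] at h₀' ⊢
    nlinarith

theorem ae_exists_tendsto_of_integral_sq_sub_le {S : ℕ → Ω → ℝ} {w : ℕ → ℝ}
    (hw0 : ∀ n, 0 ≤ w n) (hw : Summable fun n : ℕ => w n * Real.logb 2 (n + 1) ^ 2)
    (hS : ∀ a k, a ≤ k → Integrable (fun ω => (S k ω - S a ω) ^ 2) P ∧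
      ∫ ω, (S k ω - S a ω) ^ 2 ∂P ≤ ∑ n ∈ Ioc a k, w n) :
    ∀ᵐ ω ∂P, ∃ L, Tendsto (S · ω) atTop (𝓝 L) := by
  have hs := summable_sq_mul_sum_Ioc_two_pow hw0 hw
  have hD : ∀ᵐ ω ∂P,
      Summable fun p : ℕ => ((p : ℝ) + 1) ^ 2 * (S (2 ^ (p + 1)) ω - S (2 ^ p) ω) ^ 2 := by
    have hS' (p : ℕ) := hS (2 ^ p) (2 ^ (p + 1)) (pow_right_mono₀ one_le_two p.le_succ)
    refine ae_summable_of_summable_integral (fun p ω => by positivity)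
      (fun p => (hS' p).1.const_mul _) (hs.of_nonneg_of_le (fun p => ?_) fun p => ?_)
    · exact integral_nonneg fun ω => by positivity
    · rw [integral_const_mul]
      exact mul_le_mul_of_nonneg_left (hS' p).2 (by positivity)
  have hF : ∀ᵐ ω ∂P,
      Summable fun p : ℕ => ((p : ℝ) + 1) * dyadicSquareSum (S · ω) p (2 ^ p) := by
    have hS' (p : ℕ) := integral_dyadicSquareSum_le hS p (2 ^ p)
    have h2p (p : ℕ) : 2 ^ p + 2 ^ p = 2 ^ (p + 1) := by rw [pow_succ, mul_two]
    refine ae_summable_of_summable_integral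
      (fun p ω => mul_nonneg (by positivity) (dyadicSquareSum_nonneg _ _ _))
      (fun p => (hS' p).1.const_mul _) (hs.of_nonneg_of_le (fun p => ?_) fun p => ?_)
    · exact integral_nonneg fun ω => mul_nonneg (by positivity) (dyadicSquareSum_nonneg _ _ _)
    · rw [integral_const_mul, sq, mul_assoc, ← h2p]
      exact mul_le_mul_of_nonneg_left (hS' p).2 (by positivity)
  filter_upwards [hD, hF] with ω hDω hFω using exists_tendsto_of_summable_dyadic hDω hFω

end RademacherMenshov

section NegativelyCorrelated

variable {Ω : Type*} [MeasurableSpace Ω] {P : Measure Ω} {X : ℕ → Ω → ℝ}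

lemma integral_sq_sum_le_sum_sq (hmeas : ∀ n, 1 ≤ n → AEMeasurable (X n) P)
    (hnorm : ∀ n, 1 ≤ n → ∫ ω, X n ω ^ 2 ∂P = 1)
    (hneg : ∀ n m, 1 ≤ n → 1 ≤ m → n ≠ m → ∫ ω, X n ω * X m ω ∂P ≤ 0)
    {b : ℕ → ℝ} (hb : ∀ n, 0 ≤ b n) {I : Finset ℕ} (hI : ∀ n ∈ I, 1 ≤ n) :
    Integrable (fun ω => (∑ n ∈ I, b n * X n ω) ^ 2) P ∧
      ∫ ω, (∑ n ∈ I, b n * X n ω) ^ 2 ∂P ≤ ∑ n ∈ I, b n ^ 2 := by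
  have hL2 : ∀ n ∈ I, MemLp (X n) 2 P := fun n hn =>
    (memLp_two_iff_integrable_sq (hmeas n (hI n hn)).aestronglyMeasurable).2
      (Integrable.of_integral_ne_zero (by simp [hnorm n (hI n hn)]))
  have hmul : ∀ n ∈ I, ∀ m ∈ I, Integrable (fun ω => b n * b m * (X n ω * X m ω)) P :=
    fun n hn m hm => ((hL2 n hn).integrable_mul (hL2 m hm)).const_mul _
  have hexp : ∀ ω, (∑ n ∈ I, b n * X n ω) ^ 2 = ∑ n ∈ I, ∑ m ∈ I, b n * b m * (X n ω * X m ω) :=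
    fun ω => by rw [sq, sum_mul_sum]; exact sum_congr rfl fun n _ => sum_congr rfl fun m _ => by ring
  simp_rw [hexp]
  refine ⟨integrable_finsetSum _ fun n hn => integrable_finsetSum _ (hmul n hn), ?_⟩
  have hgram : ∀ n ∈ I, ∀ m ∈ I, ∫ ω, X n ω * X m ω ∂P ≤ if n = m then 1 else 0 := by
    intro n hn m hm
    split_ifs with hnm
    · simp [hnm, ← sq, hnorm m (hI m hm)]
    · exact hneg n m (hI n hn) (hI m hm) hnm
  calc ∫ ω, ∑ n ∈ I, ∑ m ∈ I, b n * b m * (X n ω * X m ω) ∂P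
      = ∑ n ∈ I, ∑ m ∈ I, b n * b m * ∫ ω, X n ω * X m ω ∂P := by
        rw [integral_finsetSum _ fun n hn => integrable_finsetSum _ (hmul n hn)]
        refine sum_congr rfl fun n hn => ?_
        rw [integral_finsetSum _ (hmul n hn)]
        exact sum_congr rfl fun m _ => integral_const_mul _ _
    _ ≤ ∑ n ∈ I, ∑ m ∈ I, b n * b m * if n = m then 1 else 0 := by
        gcongr with n hn m hm
        · exact mul_nonneg (hb n) (hb m)
        · exact hgram n hn m hm
    _ = ∑ n ∈ I, b n ^ 2 := by simp [sq]

theorem ae_exists_tendsto_sum_of_nonneg (hmeas : ∀ n, 1 ≤ n → AEMeasurable (X n) P)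
    (hnorm : ∀ n, 1 ≤ n → ∫ ω, X n ω ^ 2 ∂P = 1)
    (hneg : ∀ n m, 1 ≤ n → 1 ≤ m → n ≠ m → ∫ ω, X n ω * X m ω ∂P ≤ 0)
    {b : ℕ → ℝ} (hb : ∀ n, 0 ≤ b n)
    (hsum : Summable fun n : ℕ => b n ^ 2 * Real.logb 2 (n + 1) ^ 2) :
    ∀ᵐ ω ∂P, ∃ l, Tendsto (fun N => ∑ n ∈ Icc 1 N, b n * X n ω) atTop (𝓝 l) := by
  refine ae_exists_tendsto_of_integral_sq_sub_le (fun n => sq_nonneg (b n)) hsum fun a k hak => ?_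
  have hincr : ∀ ω, ∑ n ∈ Icc 1 k, b n * X n ω - ∑ n ∈ Icc 1 a, b n * X n ω =
      ∑ n ∈ Ioc a k, b n * X n ω := fun ω => by
    rw [← zero_add 1, Icc_add_one_left_eq_Ioc, Icc_add_one_left_eq_Ioc, sub_eq_iff_eq_add',
      sum_Ioc_consecutive _ (Nat.zero_le a) hak]
  simp only [hincr]
  exact integral_sq_sum_le_sum_sq hmeas hnorm hneg hb fun n hn => by
    have := (mem_Ioc.1 hn).1; omega

theorem ae_exists_tendsto_sum (hmeas : ∀ n, 1 ≤ n → AEMeasurable (X n) P)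
    (hnorm : ∀ n, 1 ≤ n → ∫ ω, X n ω ^ 2 ∂P = 1)
    (hneg : ∀ n m, 1 ≤ n → 1 ≤ m → n ≠ m → ∫ ω, X n ω * X m ω ∂P ≤ 0) {b : ℕ → ℝ}
    (hsum : Summable fun n : ℕ => b n ^ 2 * Real.logb 2 (n + 1) ^ 2) :
    ∀ᵐ ω ∂P, ∃ l, Tendsto (fun N => ∑ n ∈ Icc 1 N, b n * X n ω) atTop (𝓝 l) := by
  have hpart (c : ℕ → ℝ) (hc : ∀ n, 0 ≤ c n) (hcb : ∀ n, c n ≤ |b n|) :=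
    ae_exists_tendsto_sum_of_nonneg hmeas hnorm hneg hc <|
      hsum.of_nonneg_of_le (fun n => by positivity) fun n => mul_le_mul_of_nonneg_right
        (by simpa only [sq_abs] using pow_le_pow_left₀ (hc n) (hcb n) 2) (sq_nonneg _)
  filter_upwards [hpart (fun n => max (b n) 0) (fun n => le_max_right _ _)
      (fun n => max_le (le_abs_self _) (abs_nonneg _)),
    hpart (fun n => max (-b n) 0) (fun n => le_max_right _ _)
      (fun n => max_le (neg_le_abs _) (abs_nonneg _))] with ω ⟨l₁, h₁⟩ ⟨l₂, h₂⟩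
  refine ⟨l₁ - l₂, (h₁.sub h₂).congr fun N => ?_⟩
  simp only [← sum_sub_distrib, ← sub_mul, max_zero_sub_max_neg_zero_eq_self]

end NegativelyCorrelated

theorem negatively_correlated_series_converges_general
    {Ω : Type*} [MeasurableSpace Ω] (P : Measure Ω)
    (a : ℕ → ℂ) (X : ℕ → Ω → ℝ)
    (hmeas : ∀ n, 1 ≤ n → AEMeasurable (X n) P)
    (hnorm : ∀ n, 1 ≤ n → ∫ ω, (X n ω) ^ 2 ∂P = 1)
    (hneg : ∀ n m, 1 ≤ n → 1 ≤ m → n ≠ m → ∫ ω, X n ω * X m ω ∂P ≤ 0)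
    (hsum : Summable (fun n : ℕ+ => ‖a n‖ ^ 2 * (Real.logb 2 ((n : ℕ) + 1)) ^ 2)) :
    ∀ᵐ ω ∂P, ∃ l : ℂ,
      Tendsto (fun N => ∑ n ∈ Finset.Icc 1 N, a n * (X n ω : ℂ)) atTop (nhds l) := by
  have hsumN : Summable fun n : ℕ => ‖a n‖ ^ 2 * Real.logb 2 (n + 1) ^ 2 :=
    summable_pnat_iff_summable_nat.1 hsum
  have hpart (b : ℕ → ℝ) (hb : ∀ n, |b n| ≤ ‖a n‖) :=
    ae_exists_tendsto_sum hmeas hnorm hneg (b := b) <|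
      hsumN.of_nonneg_of_le (fun n => by positivity) fun n => mul_le_mul_of_nonneg_right
        (by simpa only [sq_abs] using pow_le_pow_left₀ (abs_nonneg _) (hb n) 2) (sq_nonneg _)
  filter_upwards [hpart (fun n => (a n).re) fun n => Complex.abs_re_le_norm _,
    hpart (fun n => (a n).im) fun n => Complex.abs_im_le_norm _] with ω ⟨l₁, h₁⟩ ⟨l₂, h₂⟩
  refine ⟨l₁ + l₂ * Complex.I, (((Complex.continuous_ofReal.tendsto _).comp h₁).add
    (((Complex.continuous_ofReal.tendsto _).comp h₂).mul_const Complex.I)).congr fun N => ?_⟩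
  simp only [Function.comp_apply, Complex.ofReal_sum, Complex.ofReal_mul, sum_mul,
    ← sum_add_distrib]
  refine sum_congr rfl fun n _ => ?_
  conv_rhs => rw [← Complex.re_add_im (a n)]
  ring

/-- For negatively correlated real random variables with unit second moment, the
Menshov–Rademacher condition `Σ |a_n|² log₂²(n+1) < ∞` implies that `Σ a_n X_n`
converges almost surely. -/
theorem negatively_correlated_series_converges
    {Ω : Type*} [MeasurableSpace Ω] (P : Measure Ω) [IsProbabilityMeasure P]
    (a : ℕ → ℂ) (X : ℕ → Ω → ℝ)
    (hmeas : ∀ n, 1 ≤ n → AEMeasurable (X n) P)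
    (hnorm : ∀ n, 1 ≤ n → ∫ ω, (X n ω) ^ 2 ∂P = 1)
    (hneg : ∀ n m, 1 ≤ n → 1 ≤ m → n ≠ m → ∫ ω, X n ω * X m ω ∂P ≤ 0)
    (hsum : Summable (fun n : ℕ+ => ‖a n‖ ^ 2 * (Real.logb 2 ((n : ℕ) + 1)) ^ 2)) :
    ∀ᵐ ω ∂P, ∃ l : ℂ,
      Tendsto (fun N => ∑ n ∈ Finset.Icc 1 N, a n * (X n ω : ℂ)) atTop (nhds l) :=
  negatively_correlated_series_converges_general P a X hmeas hnorm hneg hsum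
end

section
/- Let (X_n)_{n≥1} be a sequence of real-valued random variables with E(X_n²) = 1 for all n and E(X_n X_m) ≤ 0 for all n ≠ m, and let (c_n)_{n≥1} be a sequence of nonnegative real numbers with Σ_{n=1}^∞ c_n² < ∞. Then Σ_{n,m=1}^∞ c_n c_m |E(X_n X_m)| ≤ 2 Σ_{n=1}^∞ c_n². -/
/-!
Put `e n m = E(X_n X_m)`. The Gram matrix `e` is positive semidefinite, so
`Σ c_n c_m e_{nm} = E (Σ c_n X_n)² ≥ 0` over every finite index set. Since `e` has unit diagonal
and nonpositive off-diagonal entries, `|e_{nm}| + e_{nm}` is `2` on the diagonal and `0` off it,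
whence `Σ c_n c_m |e_{nm}| = 2 Σ c_n² - Σ c_n c_m e_{nm} ≤ 2 Σ c_n²` for every finite section,
and the infinite sum (taken in `ℝ≥0∞`) is the supremum of these.
-/

open MeasureTheory
open scoped ENNReal

lemma Finset.sum_sum_mul_abs_le_of_offDiag_nonpos {ι : Type*} [DecidableEq ι] (F : Finset ι)
    (c : ι → ℝ) (e : ι → ι → ℝ) (hdiag : ∀ n ∈ F, e n n = 1)
    (hoff : ∀ n ∈ F, ∀ m ∈ F, n ≠ m → e n m ≤ 0)
    (hpsd : 0 ≤ ∑ n ∈ F, ∑ m ∈ F, c n * c m * e n m) :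
    ∑ n ∈ F, ∑ m ∈ F, c n * c m * |e n m| ≤ 2 * ∑ n ∈ F, c n ^ 2 := by
  have hsum : ∑ n ∈ F, ∑ m ∈ F, c n * c m * (|e n m| + e n m) = 2 * ∑ n ∈ F, c n ^ 2 := by
    rw [Finset.mul_sum]
    refine Finset.sum_congr rfl fun n hn => ?_
    rw [Finset.sum_eq_single_of_mem n hn fun m hm hmn => ?_]
    · rw [hdiag n hn, abs_one]
      ring
    · rw [abs_of_nonpos (hoff n hn m hm hmn.symm)]
      ring
  simp only [mul_add, Finset.sum_add_distrib] at hsum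
  linarith

section Gram

variable {Ω ι : Type*} [MeasurableSpace Ω] {μ : Measure Ω}

lemma memLp_two_of_integral_sq_ne_zero {f : Ω → ℝ} (hf : AEStronglyMeasurable f μ)
    (h : ∫ ω, f ω ^ 2 ∂μ ≠ 0) : MemLp f 2 μ :=
  (memLp_two_iff_integrable_sq hf).2 (Integrable.of_integral_ne_zero h)

lemma integral_sq_sum_eq_sum_sum_mul_integral_mul (F : Finset ι) (c : ι → ℝ)
    {X : ι → Ω → ℝ} (hX : ∀ n ∈ F, MemLp (X n) 2 μ) :
    ∫ ω, (∑ n ∈ F, c n * X n ω) ^ 2 ∂μ =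
      ∑ n ∈ F, ∑ m ∈ F, c n * c m * ∫ ω, X n ω * X m ω ∂μ := by
  have hint : ∀ n ∈ F, ∀ m ∈ F, Integrable (fun ω => c n * c m * (X n ω * X m ω)) μ :=
    fun n hn m hm => ((hX n hn).integrable_mul (hX m hm)).const_mul _
  have hexpand : ∀ ω, (∑ n ∈ F, c n * X n ω) ^ 2 =
      ∑ n ∈ F, ∑ m ∈ F, c n * c m * (X n ω * X m ω) := fun ω => by
    rw [sq, Finset.sum_mul_sum]
    exact Finset.sum_congr rfl fun _ _ => Finset.sum_congr rfl fun _ _ => by ring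
  simp_rw [hexpand]
  rw [integral_finsetSum F fun n hn => integrable_finsetSum F (hint n hn)]
  refine Finset.sum_congr rfl fun n hn => ?_
  rw [integral_finsetSum F (hint n hn)]
  simp_rw [integral_const_mul]

lemma sum_sum_mul_integral_mul_nonneg (F : Finset ι) (c : ι → ℝ)
    {X : ι → Ω → ℝ} (hX : ∀ n ∈ F, MemLp (X n) 2 μ) :
    0 ≤ ∑ n ∈ F, ∑ m ∈ F, c n * c m * ∫ ω, X n ω * X m ω ∂μ := by
  rw [← integral_sq_sum_eq_sum_sum_mul_integral_mul F c hX]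
  exact integral_nonneg fun ω => sq_nonneg _

end Gram

lemma ENNReal.tsum_tsum_le_of_sum_sum_le {ι : Type*} {f : ι → ι → ℝ≥0∞} {a : ℝ≥0∞}
    (h : ∀ F : Finset ι, ∑ n ∈ F, ∑ m ∈ F, f n m ≤ a) : ∑' n, ∑' m, f n m ≤ a := by
  classical
  rw [← ENNReal.tsum_prod, ENNReal.tsum_eq_iSup_sum' (fun F : Finset ι => F ×ˢ F) fun S =>
    ⟨S.image Prod.fst ∪ S.image Prod.snd, fun p hp => Finset.mem_product.2
      ⟨Finset.mem_union_left _ (Finset.mem_image_of_mem _ hp),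
        Finset.mem_union_right _ (Finset.mem_image_of_mem _ hp)⟩⟩]
  exact iSup_le fun F => (Finset.sum_product F F _).trans_le (h F)

lemma ENNReal.tsum_tsum_ofReal_le_tsum_ofReal {ι : Type*} {f : ι → ι → ℝ} {g : ι → ℝ}
    (hf : ∀ n m, 0 ≤ f n m) (hg : ∀ n, 0 ≤ g n) (h : ∀ F : Finset ι, ∑ n ∈ F, ∑ m ∈ F, f n m ≤ ∑ n ∈ F, g n) :
    ∑' n, ∑' m, ENNReal.ofReal (f n m) ≤ ∑' n, ENNReal.ofReal (g n) := by
  refine ENNReal.tsum_tsum_le_of_sum_sum_le fun F => ?_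
  calc ∑ n ∈ F, ∑ m ∈ F, ENNReal.ofReal (f n m)
      = ENNReal.ofReal (∑ n ∈ F, ∑ m ∈ F, f n m) := by
        rw [ENNReal.ofReal_sum_of_nonneg fun n _ => Finset.sum_nonneg fun m _ => hf n m]
        exact Finset.sum_congr rfl fun n _ => (ENNReal.ofReal_sum_of_nonneg fun m _ => hf n m).symm
    _ ≤ ENNReal.ofReal (∑ n ∈ F, g n) := ENNReal.ofReal_le_ofReal (h F)
    _ = ∑ n ∈ F, ENNReal.ofReal (g n) := ENNReal.ofReal_sum_of_nonneg fun n _ => hg n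
    _ ≤ ∑' n, ENNReal.ofReal (g n) := ENNReal.sum_le_tsum F

theorem negatively_correlated_double_sum_bound_general
    {Ω : Type*} [MeasurableSpace Ω] (P : Measure Ω)
    (X : ℕ → Ω → ℝ) (c : ℕ → ℝ)
    (hmeas : ∀ n, 1 ≤ n → AEMeasurable (X n) P)
    (hnorm : ∀ n, 1 ≤ n → ∫ ω, (X n ω) ^ 2 ∂P = 1)
    (hneg : ∀ n m, 1 ≤ n → 1 ≤ m → n ≠ m → ∫ ω, X n ω * X m ω ∂P ≤ 0)
    (hc : ∀ n, 1 ≤ n → 0 ≤ c n) :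
    ∑' (n : ℕ+) (m : ℕ+),
        ENNReal.ofReal (c n * c m * |∫ ω, X n ω * X m ω ∂P|) ≤
      2 * ∑' (n : ℕ+), ENNReal.ofReal ((c n) ^ 2) := by
  have hL2 (n : ℕ+) : MemLp (X n) 2 P :=
    memLp_two_of_integral_sq_ne_zero (hmeas n n.2).aestronglyMeasurable
      (by rw [hnorm n n.2]; exact one_ne_zero)
  have hfin (F : Finset ℕ+) :
      ∑ n ∈ F, ∑ m ∈ F, c n * c m * |∫ ω, X n ω * X m ω ∂P| ≤ ∑ n ∈ F, 2 * c n ^ 2 := by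
    rw [← Finset.mul_sum]
    refine F.sum_sum_mul_abs_le_of_offDiag_nonpos (fun n : ℕ+ => c n)
      (fun n m : ℕ+ => ∫ ω, X n ω * X m ω ∂P) (fun n _ => ?_)
      (fun n _ m _ hnm => hneg n m n.2 m.2 (PNat.coe_injective.ne hnm))
      (sum_sum_mul_integral_mul_nonneg F _ fun n _ => hL2 n)
    simpa only [sq] using hnorm n n.2
  calc _ ≤ ∑' n : ℕ+, ENNReal.ofReal (2 * c n ^ 2) :=
        ENNReal.tsum_tsum_ofReal_le_tsum_ofReal
          (fun n m => mul_nonneg (mul_nonneg (hc n n.2) (hc m m.2)) (abs_nonneg _))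
          (fun n => by positivity) hfin
    _ = _ := by
        simp_rw [ENNReal.ofReal_mul zero_le_two, ENNReal.ofReal_ofNat, ENNReal.tsum_mul_left]

/-- For negatively correlated real random variables with unit second moment and a
nonnegative square-summable sequence `(c_n)`,
`Σ_{n,m≥1} c_n c_m |E(X_n X_m)| ≤ 2 Σ_{n≥1} c_n²`. -/
theorem negatively_correlated_double_sum_bound
    {Ω : Type*} [MeasurableSpace Ω] (P : Measure Ω) [IsProbabilityMeasure P]
    (X : ℕ → Ω → ℝ) (c : ℕ → ℝ)
    (hmeas : ∀ n, 1 ≤ n → AEMeasurable (X n) P)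
    (hnorm : ∀ n, 1 ≤ n → ∫ ω, (X n ω) ^ 2 ∂P = 1)
    (hneg : ∀ n m, 1 ≤ n → 1 ≤ m → n ≠ m → ∫ ω, X n ω * X m ω ∂P ≤ 0)
    (hc : ∀ n, 1 ≤ n → 0 ≤ c n)
    (hsum : Summable (fun n : ℕ+ => (c n) ^ 2)) :
    ∑' (n : ℕ+) (m : ℕ+),
        ENNReal.ofReal (c n * c m * |∫ ω, X n ω * X m ω ∂P|) ≤
      2 * ∑' (n : ℕ+), ENNReal.ofReal ((c n) ^ 2) :=
  negatively_correlated_double_sum_bound_general P X c hmeas hnorm hneg hc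
end

section
/- Let a ≥ 0 and b > (1−a)/2 with b ≥ 0. Then there exists a constant K > 0 such that for every square-summable sequence (x_n)_{n≥1} of nonnegative real numbers, Σ_{n≠m} |n − m|^{-a} · n^{-b} · m^{-b} · x_n · x_m ≤ K Σ_{n=1}^∞ x_n²; that is, the infinite matrix with off-diagonal entries |n−m|^{-a} n^{-b} m^{-b} (n ≠ m) and zero diagonal defines a bounded linear operator on ℓ²(ℕ). -/
/-!
Schur test with the weight `w n = n^{-b}`: by AM-GM,
`2 K(n,m) x_n x_m ≤ K(n,m) (w_m/w_n x_n² + w_n/w_m x_m²)`, so it suffices that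
`Σ_m K(n,m) w_m ≤ C w_n`, i.e. that the row sums `Σ_{m≠n} |n-m|^{-a} m^{-2b}` are bounded
uniformly in `n`. Since `a, 2b ≥ 0`, each term is at most `k^{-(a+2b)}` for
`k = min(|n-m|, m)`, and both `Σ_m |n-m|^{-(a+2b)}` and `Σ_m m^{-(a+2b)}` are dominated by
`Σ_{z∈ℤ} |z|^{-(a+2b)}`, which converges because `a + 2b > 1`.
-/

open scoped ENNReal

lemma two_mul_le_div_mul_sq_add_div_mul_sq {u v : ℝ} (hu : 0 < u) (hv : 0 < v) (x y : ℝ) :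
    2 * x * y ≤ v / u * x ^ 2 + u / v * y ^ 2 := by
  rw [div_mul_eq_mul_div, div_mul_eq_mul_div, div_add_div _ _ hu.ne' hv.ne',
    le_div_iff₀ (mul_pos hu hv)]
  nlinarith [sq_nonneg (v * x - u * y)]

theorem schur_test {ι : Type*} (k : ι → ι → ℝ) (hk : ∀ i j, 0 ≤ k i j)
    (hsymm : ∀ i j, k i j = k j i) (w : ι → ℝ) (hw : ∀ i, 0 < w i) (C : ℝ≥0∞)
    (hrow : ∀ i, ∑' j, ENNReal.ofReal (k i j * w j) ≤ C * ENNReal.ofReal (w i)) (x : ι → ℝ) :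
    ∑' p : ι × ι, ENNReal.ofReal (k p.1 p.2 * x p.1 * x p.2) ≤
      C * ∑' i, ENNReal.ofReal (x i ^ 2) := by
  set F : ι × ι → ℝ≥0∞ := fun p => ENNReal.ofReal (k p.1 p.2 * w p.2 / w p.1 * x p.1 ^ 2)
  have hpoint : ∀ p : ι × ι, 2 * ENNReal.ofReal (k p.1 p.2 * x p.1 * x p.2) ≤ F p + F p.swap := by
    rintro ⟨i, j⟩
    have hamgm := two_mul_le_div_mul_sq_add_div_mul_sq (hw i) (hw j) (x i) (x j)
    rw [← ENNReal.ofReal_ofNat 2, ← ENNReal.ofReal_mul zero_le_two]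
    refine (ENNReal.ofReal_le_ofReal ?_).trans ENNReal.ofReal_add_le
    dsimp only [F, Prod.swap_prod_mk]
    rw [hsymm j i]
    linear_combination mul_le_mul_of_nonneg_left hamgm (hk i j)
  have hF : ∑' p, F p ≤ C * ∑' i, ENNReal.ofReal (x i ^ 2) := by
    have hrowF : ∀ i, ∑' j, F (i, j) ≤ C * ENNReal.ofReal (x i ^ 2) := fun i =>
      calc ∑' j, F (i, j)
          = ENNReal.ofReal (x i ^ 2 / w i) * ∑' j, ENNReal.ofReal (k i j * w j) := by
            rw [← ENNReal.tsum_mul_left]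
            refine tsum_congr fun j => ?_
            rw [← ENNReal.ofReal_mul (by positivity [hw i])]
            dsimp only [F]
            ring_nf
        _ ≤ ENNReal.ofReal (x i ^ 2 / w i) * (C * ENNReal.ofReal (w i)) := by gcongr; exact hrow i
        _ = C * ENNReal.ofReal (x i ^ 2) := by
            rw [mul_left_comm, ← ENNReal.ofReal_mul (by positivity [hw i]),
              div_mul_cancel₀ _ (hw i).ne']
    rw [ENNReal.tsum_prod', ← ENNReal.tsum_mul_left]
    exact ENNReal.tsum_le_tsum hrowF
  have hswap : ∑' p : ι × ι, F p.swap = ∑' p, F p := (Equiv.prodComm ι ι).tsum_eq F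
  refine (ENNReal.mul_le_mul_iff_right two_ne_zero ENNReal.ofNat_ne_top).mp ?_
  calc 2 * ∑' p : ι × ι, ENNReal.ofReal (k p.1 p.2 * x p.1 * x p.2)
      = ∑' p : ι × ι, 2 * ENNReal.ofReal (k p.1 p.2 * x p.1 * x p.2) := ENNReal.tsum_mul_left.symm
    _ ≤ ∑' p : ι × ι, (F p + F p.swap) := ENNReal.tsum_le_tsum hpoint
    _ = 2 * ∑' p, F p := by rw [ENNReal.tsum_add, hswap, two_mul]
    _ ≤ 2 * (C * ∑' i, ENNReal.ofReal (x i ^ 2)) := by gcongr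

lemma rpow_neg_mul_rpow_neg_le_add {u v a d : ℝ} (hu : 0 < u) (hv : 0 < v) (ha : 0 ≤ a)
    (hd : 0 ≤ d) : u ^ (-a) * v ^ (-d) ≤ u ^ (-(a + d)) + v ^ (-(a + d)) := by
  have hmin : 0 < min u v := lt_min hu hv
  calc u ^ (-a) * v ^ (-d) ≤ min u v ^ (-a) * min u v ^ (-d) := by
        apply mul_le_mul _ _ (by positivity) (by positivity)
        · exact Real.rpow_le_rpow_of_nonpos hmin (min_le_left u v) (neg_nonpos.mpr ha)
        · exact Real.rpow_le_rpow_of_nonpos hmin (min_le_right u v) (neg_nonpos.mpr hd)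
    _ = min u v ^ (-(a + d)) := by rw [← Real.rpow_add hmin, neg_add]
    _ ≤ u ^ (-(a + d)) + v ^ (-(a + d)) := by
        rcases min_choice u v with h | h <;> rw [h] <;> simp [Real.rpow_nonneg, hu.le, hv.le]

lemma tsum_ofReal_abs_int_rpow_neg_ne_top {s : ℝ} (hs : 1 < s) :
    ∑' z : ℤ, ENNReal.ofReal (|(z : ℝ)| ^ (-s)) ≠ ⊤ := by
  rw [← ENNReal.ofReal_tsum_of_nonneg (fun _ => by positivity) (Real.summable_abs_int_rpow hs)]
  exact ENNReal.ofReal_ne_top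

lemma tsum_ite_ne_abs_sub_rpow_neg_mul_rpow_neg_le {a d : ℝ} (ha : 0 ≤ a) (hd : 0 ≤ d) (n : ℕ+) :
    ∑' m : ℕ+, (if n ≠ m then
        ENNReal.ofReal (|((n : ℕ) : ℝ) - ((m : ℕ) : ℝ)| ^ (-a) * ((m : ℕ) : ℝ) ^ (-d)) else 0) ≤
      2 * ∑' z : ℤ, ENNReal.ofReal (|(z : ℝ)| ^ (-(a + d))) := by
  set Z : ℤ → ℝ≥0∞ := fun z => ENNReal.ofReal (|(z : ℝ)| ^ (-(a + d)))
  have hpoint : ∀ m : ℕ+, (if n ≠ m then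
      ENNReal.ofReal (|((n : ℕ) : ℝ) - ((m : ℕ) : ℝ)| ^ (-a) * ((m : ℕ) : ℝ) ^ (-d)) else 0) ≤
      Z ((n : ℤ) - (m : ℤ)) + Z (m : ℤ) := by
    intro m
    split_ifs with hnm
    · have hdist : 0 < |((n : ℕ) : ℝ) - ((m : ℕ) : ℝ)| := by
        rw [abs_pos, sub_ne_zero, Ne, Nat.cast_inj, PNat.coe_inj]
        exact hnm
      refine (ENNReal.ofReal_le_ofReal ?_).trans ENNReal.ofReal_add_le
      push_cast
      rw [Nat.abs_cast]
      exact rpow_neg_mul_rpow_neg_le_add hdist (Nat.cast_pos.mpr m.pos) ha hd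
    · positivity
  have hinj_sub : Function.Injective fun m : ℕ+ => (n : ℤ) - (m : ℤ) := fun m₁ m₂ h => by
    simpa using h
  have hinj_coe : Function.Injective fun m : ℕ+ => ((m : ℕ) : ℤ) := fun m₁ m₂ h => by
    simpa using h
  calc _ ≤ ∑' m : ℕ+, (Z ((n : ℤ) - (m : ℤ)) + Z (m : ℤ)) := ENNReal.tsum_le_tsum hpoint
    _ = ∑' m : ℕ+, Z ((n : ℤ) - (m : ℤ)) + ∑' m : ℕ+, Z (m : ℤ) := ENNReal.tsum_add
    _ ≤ ∑' z, Z z + ∑' z, Z z := by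
        gcongr
        · exact ENNReal.tsum_comp_le_tsum_of_injective hinj_sub Z
        · exact ENNReal.tsum_comp_le_tsum_of_injective hinj_coe Z
    _ = 2 * ∑' z, Z z := (two_mul _).symm

noncomputable def offDiagPowerKernel (a b : ℝ) (n m : ℕ+) : ℝ :=
  if n ≠ m then |((n : ℕ) : ℝ) - ((m : ℕ) : ℝ)| ^ (-a) * ((n : ℕ) : ℝ) ^ (-b) * ((m : ℕ) : ℝ) ^ (-b)
  else 0

namespace offDiagPowerKernel

variable {a b : ℝ}

lemma nonneg (n m : ℕ+) : 0 ≤ offDiagPowerKernel a b n m := by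
  unfold offDiagPowerKernel
  split_ifs <;> positivity

lemma comm (n m : ℕ+) : offDiagPowerKernel a b n m = offDiagPowerKernel a b m n := by
  unfold offDiagPowerKernel
  by_cases h : n = m
  · simp [h]
  · rw [if_pos h, if_pos (Ne.symm h), abs_sub_comm]
    ring

lemma tsum_ofReal_mul_rpow_neg_le (ha : 0 ≤ a) (hb : 0 ≤ b) (n : ℕ+) :
    ∑' m, ENNReal.ofReal (offDiagPowerKernel a b n m * ((m : ℕ) : ℝ) ^ (-b)) ≤
      (2 * ∑' z : ℤ, ENNReal.ofReal (|(z : ℝ)| ^ (-(a + (b + b))))) *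
        ENNReal.ofReal (((n : ℕ) : ℝ) ^ (-b)) := by
  have hterm : ∀ m : ℕ+, ENNReal.ofReal (offDiagPowerKernel a b n m * ((m : ℕ) : ℝ) ^ (-b)) =
      ENNReal.ofReal (((n : ℕ) : ℝ) ^ (-b)) * (if n ≠ m then
        ENNReal.ofReal (|((n : ℕ) : ℝ) - ((m : ℕ) : ℝ)| ^ (-a) * ((m : ℕ) : ℝ) ^ (-(b + b)))
        else 0) := by
    intro m
    have hm : (0 : ℝ) < ((m : ℕ) : ℝ) := Nat.cast_pos.mpr m.pos
    unfold offDiagPowerKernel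
    split_ifs
    · rw [← ENNReal.ofReal_mul (by positivity), neg_add, Real.rpow_add hm]
      ring_nf
    · simp
  rw [tsum_congr hterm, ENNReal.tsum_mul_left, mul_comm]
  gcongr
  exact tsum_ite_ne_abs_sub_rpow_neg_mul_rpow_neg_le ha (add_nonneg hb hb) n

end offDiagPowerKernel

/-- For `a ≥ 0` and `b > (1-a)/2` with `b ≥ 0`, the matrix with off-diagonal entries
`|n-m|^{-a} n^{-b} m^{-b}` (and zero diagonal) defines a bounded operator on `ℓ²(ℕ)`:
there is `K > 0` with `Σ_{n≠m} |n-m|^{-a} n^{-b} m^{-b} x_n x_m ≤ K Σ_n x_n²`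
for every square-summable nonnegative sequence `(x_n)_{n≥1}`. -/
theorem schur_bound_matrix
    (a b : ℝ) (ha : 0 ≤ a) (hb : b > (1 - a) / 2) (hb0 : 0 ≤ b) :
    ∃ K > (0 : ℝ), ∀ x : ℕ+ → ℝ, (∀ n, 0 ≤ x n) →
      Summable (fun n : ℕ+ => (x n) ^ 2) →
      ∑' (p : ℕ+ × ℕ+),
          (if p.1 ≠ p.2 then
            ENNReal.ofReal (|((p.1 : ℕ) : ℝ) - ((p.2 : ℕ) : ℝ)| ^ (-a) *
              ((p.1 : ℕ) : ℝ) ^ (-b) * ((p.2 : ℕ) : ℝ) ^ (-b) * x p.1 * x p.2)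
          else 0) ≤
        ENNReal.ofReal K * ∑' (n : ℕ+), ENNReal.ofReal ((x n) ^ 2) := by
  set C := 2 * ∑' z : ℤ, ENNReal.ofReal (|(z : ℝ)| ^ (-(a + (b + b))))
  have hC : C ≠ ⊤ :=
    ENNReal.mul_ne_top ENNReal.ofNat_ne_top (tsum_ofReal_abs_int_rpow_neg_ne_top (by linarith))
  refine ⟨C.toReal + 1, by positivity, fun x _ _ => ?_⟩
  calc _ = ∑' p : ℕ+ × ℕ+,
          ENNReal.ofReal (offDiagPowerKernel a b p.1 p.2 * x p.1 * x p.2) := by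
        refine tsum_congr fun p => ?_
        unfold offDiagPowerKernel
        split_ifs <;> simp
    _ ≤ C * ∑' n, ENNReal.ofReal (x n ^ 2) :=
        schur_test _ offDiagPowerKernel.nonneg offDiagPowerKernel.comm
          (fun n => ((n : ℕ) : ℝ) ^ (-b)) (fun n => by positivity) C
          (offDiagPowerKernel.tsum_ofReal_mul_rpow_neg_le ha hb0) x
    _ ≤ ENNReal.ofReal (C.toReal + 1) * ∑' n, ENNReal.ofReal (x n ^ 2) := by
        gcongr
        rw [← ENNReal.ofReal_toReal hC]
        exact ENNReal.ofReal_le_ofReal (by simp)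
end

section
/- Let 0 ≤ a ≤ 1 and let μ be a Borel probability measure on 𝕋 = ℝ/ℤ such that |μ̂(n)| ≤ K |n|^{-a} for all integers n ≠ 0 and some constant K > 0. Let f ∈ L²(𝕋) with Fourier coefficients f̂(n), and suppose f belongs to the Sobolev space H^p(𝕋) for some p > (1−a)/2, i.e. Σ_{n∈ℤ} |f̂(n)|² (1 + n²)^p < ∞. Then the Fourier series Σ_{n∈ℤ} f̂(n) exp(2πint) of f converges μ-almost everywhere on 𝕋, in the sense that the symmetric partial sums Σ_{|n|≤N} f̂(n) exp(2πint) converge in ℂ as N → ∞ for μ-almost every t ∈ 𝕋. -/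
/-!
Integrating `|∑ aₙ e(nt)|²` against `μ` gives the Hermitian form `∑ₙ,ₘ aₙ āₘ μ̂(m - n)`, so by
Schur's test a trigonometric polynomial with frequencies in `[-M, M]` has `L²(μ)`-norm squared at
most `∑_{|d| ≤ 2M} |μ̂(d)| ≲ M^s` times its `ℓ²`-norm squared, for any `0 < s ≤ 1` with
`1 - α ≤ s`. On the dyadic band `2^j < |n| ≤ 2^(j+1)` the Sobolev weight gains `2^(-2pj)`.
The Rademacher–Menshov chaining inequality bounds the oscillation of the partial sums `S_N`,
`2^j ≤ N ≤ 2^(j+1)`, by `j + 1` square functions of increments over dyadic subintervals of the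
band; by Jensen each has `L¹(μ)`-norm `≲ 2^(j(s/2 - p))`. Taking `s < 2p`, these bounds are
summable in `j`, hence so are the oscillations `μ`-a.e., and `S_N(t)` is Cauchy.
-/

open MeasureTheory Filter Finset Topology ComplexConjugate

lemma mul_rpow_sub_one_le_rpow_sub_rpow {s x : ℝ} (hx : 0 ≤ x) (hs0 : 0 ≤ s) (hs1 : s ≤ 1) :
    s * (x + 1) ^ (s - 1) ≤ (x + 1) ^ s - x ^ s := by
  have hx1 : 0 < x + 1 := by linarith
  have hbern : (1 + -(x + 1)⁻¹) ^ s ≤ 1 + s * -(x + 1)⁻¹ :=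
    rpow_one_add_le_one_add_mul_self (neg_le_neg (inv_le_one_of_one_le₀ (by linarith))) hs0 hs1
  rw [show 1 + -(x + 1)⁻¹ = x / (x + 1) by field_simp; ring] at hbern
  calc s * (x + 1) ^ (s - 1) = (x + 1) ^ s - (x + 1) ^ s * (1 + s * -(x + 1)⁻¹) := by
        rw [Real.rpow_sub_one hx1.ne']; ring
    _ ≤ (x + 1) ^ s - (x + 1) ^ s * (x / (x + 1)) ^ s := by gcongr
    _ = (x + 1) ^ s - x ^ s := by
        rw [← Real.mul_rpow hx1.le (by positivity), mul_div_cancel₀ _ hx1.ne']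

lemma sum_range_rpow_sub_one_le {s : ℝ} (hs0 : 0 < s) (hs1 : s ≤ 1) (L : ℕ) :
    ∑ k ∈ range L, ((k : ℝ) + 1) ^ (s - 1) ≤ (L : ℝ) ^ s / s := by
  rw [le_div_iff₀ hs0, sum_mul]
  calc ∑ k ∈ range L, ((k : ℝ) + 1) ^ (s - 1) * s
      ≤ ∑ k ∈ range L, (((k + 1 : ℕ) : ℝ) ^ s - (k : ℝ) ^ s) := by
        gcongr with k
        push_cast
        linarith [mul_rpow_sub_one_le_rpow_sub_rpow k.cast_nonneg hs0.le hs1]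
    _ = (L : ℝ) ^ s := by
        rw [sum_range_sub (fun k : ℕ => (k : ℝ) ^ s)]
        simp [Real.zero_rpow hs0.ne']

lemma summable_natCast_add_one_mul_geometric {ρ : ℝ} (h0 : 0 ≤ ρ) (h1 : ρ < 1) :
    Summable fun j : ℕ => ((j : ℝ) + 1) * ρ ^ j := by
  simpa [add_mul] using (summable_pow_mul_geometric_of_norm_lt_one 1
    (by rwa [Real.norm_of_nonneg h0])).add (summable_geometric_of_lt_one h0 h1)

lemma sum_Icc_neg_eq_add_sum_range {M : Type*} [AddCommMonoid M] (g : ℤ → M) (L : ℕ) :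
    ∑ d ∈ Icc (-(L : ℤ)) L, g d = g 0 + ∑ k ∈ range L, (g (k + 1) + g (-(k + 1))) := by
  induction L with
  | zero => simp
  | succ L ih =>
    have hIcc : Icc (-((L + 1 : ℕ) : ℤ)) (L + 1 : ℕ) =
        insert ((L : ℤ) + 1) (insert (-((L : ℤ) + 1)) (Icc (-(L : ℤ)) L)) := by
      ext d
      simp only [mem_Icc, mem_insert]
      push_cast
      omega
    rw [hIcc, sum_insert (by simp only [mem_insert, mem_Icc]; omega),
      sum_insert (by simp only [mem_Icc]; omega), ih, sum_range_succ]
    abel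

lemma sum_sub_le_sum_Icc (g : ℤ → ℝ) (hg : ∀ d, 0 ≤ g d) {F : Finset ℤ} {L : ℕ}
    (hF : ∀ m ∈ F, |m| ≤ L) {n : ℤ} (hn : |n| ≤ L) :
    ∑ m ∈ F, g (n - m) ≤ ∑ d ∈ Icc (-(2 * L : ℕ) : ℤ) (2 * L : ℕ), g d := by
  rw [← sum_image (g := fun m => n - m) fun _ _ _ _ h => by simpa using h]
  refine sum_le_sum_of_subset_of_nonneg (fun d hd => ?_) fun d _ _ => hg d
  obtain ⟨m, hm, rfl⟩ := mem_image.1 hd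
  have := abs_le.1 (hF m hm)
  have := abs_le.1 hn
  simp only [mem_Icc]
  push_cast
  omega

lemma sum_sum_mul_le_of_row_sum_le {ι : Type*} (F : Finset ι) (x : ι → ℝ) (k : ι → ι → ℝ)
    (R : ℝ) (hk : ∀ n ∈ F, ∀ m ∈ F, 0 ≤ k n m) (hrow : ∀ n ∈ F, ∑ m ∈ F, k n m ≤ R)
    (hcol : ∀ m ∈ F, ∑ n ∈ F, k n m ≤ R) :
    ∑ n ∈ F, ∑ m ∈ F, x n * x m * k n m ≤ R * ∑ n ∈ F, x n ^ 2 := by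
  calc ∑ n ∈ F, ∑ m ∈ F, x n * x m * k n m
      ≤ ∑ n ∈ F, ∑ m ∈ F, (x n ^ 2 / 2 * k n m + x m ^ 2 / 2 * k n m) :=
        sum_le_sum fun n hn => sum_le_sum fun m hm => by
          nlinarith [hk n hn m hm, mul_nonneg (hk n hn m hm) (sq_nonneg (x n - x m))]
    _ = ∑ n ∈ F, x n ^ 2 / 2 * ∑ m ∈ F, k n m + ∑ m ∈ F, x m ^ 2 / 2 * ∑ n ∈ F, k n m := by
        simp only [sum_add_distrib, mul_sum]
        rw [sum_comm (f := fun n m => x m ^ 2 / 2 * k n m)]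
    _ ≤ ∑ n ∈ F, x n ^ 2 / 2 * R + ∑ m ∈ F, x m ^ 2 / 2 * R := by
        gcongr with n hn m hm
        exacts [hrow n hn, hcol m hm]
    _ = R * ∑ n ∈ F, x n ^ 2 := by
        rw [← sum_add_distrib, mul_sum]
        exact sum_congr rfl fun n _ => by ring

section DyadicChain

variable {E : Type*} [SeminormedAddCommGroup E]

noncomputable def dyadicChain (h : ℕ → E) (r : ℕ) : ℝ :=
  ∑ ℓ ∈ range r, √(∑ k ∈ range (2 ^ (r - ℓ)), ‖h ((k + 1) * 2 ^ ℓ) - h (k * 2 ^ ℓ)‖ ^ 2)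

lemma dyadicChain_nonneg (h : ℕ → E) (r : ℕ) : 0 ≤ dyadicChain h r :=
  sum_nonneg fun _ _ => Real.sqrt_nonneg _

lemma dyadicChain_succ (h : ℕ → E) (r : ℕ) :
    dyadicChain h (r + 1) = √(∑ k ∈ range (2 ^ (r + 1)), ‖h (k + 1) - h k‖ ^ 2) +
      dyadicChain (fun i => h (2 * i)) r := by
  rw [dyadicChain, sum_range_succ', add_comm]
  congr 1
  · simp
  · refine sum_congr rfl fun ℓ hℓ => ?_
    simp only [Nat.add_sub_add_right, pow_succ]
    congr 2 with k
    ring_nf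

lemma continuous_dyadicChain {X : Type*} [TopologicalSpace X] (h : ℕ → X → E)
    (hh : ∀ n, Continuous (h n)) (r : ℕ) : Continuous fun t => dyadicChain (fun i => h i t) r := by
  unfold dyadicChain
  fun_prop

lemma norm_sub_le_dyadicChain (h : ℕ → E) {d r : ℕ} (hd : d < 2 ^ r) :
    ‖h d - h 0‖ ≤ dyadicChain h r := by
  induction r generalizing h d with
  | zero => simp [Nat.lt_one_iff.1 (by simpa using hd), dyadicChain]
  | succ r ih =>
    have hfine : ‖h d - h (2 * (d / 2))‖ ≤ √(∑ k ∈ range (2 ^ (r + 1)), ‖h (k + 1) - h k‖ ^ 2) := by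
      refine Real.le_sqrt_of_sq_le (le_trans ?_ (single_le_sum (f := fun k => ‖h (k + 1) - h k‖ ^ 2)
        (fun _ _ => sq_nonneg _) (mem_range.2 (show 2 * (d / 2) < 2 ^ (r + 1) by omega))))
      rcases Nat.even_or_odd' d with ⟨d', rfl | rfl⟩
      · simp
      · simp [Nat.add_div_of_dvd_right]
    have hcoarse := ih (fun i => h (2 * i)) (d := d / 2) (by rw [pow_succ] at hd; omega)
    calc ‖h d - h 0‖ ≤ ‖h d - h (2 * (d / 2))‖ + ‖h (2 * (d / 2)) - h 0‖ :=
          norm_sub_le_norm_sub_add_norm_sub _ _ _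
      _ ≤ _ := by rw [dyadicChain_succ]; exact add_le_add hfine hcoarse

end DyadicChain

lemma tendsto_nat_log_atTop {b : ℕ} (hb : 1 < b) : Tendsto (Nat.log b) atTop atTop :=
  tendsto_atTop_atTop_of_monotone (fun _ _ h => Nat.log_mono_right h)
    fun n => ⟨b ^ n, (Nat.log_pow hb n).ge⟩

lemma exists_tendsto_of_summable_dyadicChain {E : Type*} [NormedAddCommGroup E] [CompleteSpace E]
    (h : ℕ → E)
    (hsum : Summable fun j =>
      ‖h (2 ^ (j + 1)) - h (2 ^ j)‖ + dyadicChain (fun i => h (2 ^ j + i)) j) :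
    ∃ l, Tendsto h atTop (𝓝 l) := by
  have hjump : Summable fun j => dist (h (2 ^ j)) (h (2 ^ (j + 1))) := by
    refine hsum.of_nonneg_of_le (fun _ => dist_nonneg) fun j => ?_
    rw [dist_comm, dist_eq_norm]
    exact le_add_of_nonneg_right (dyadicChain_nonneg _ _)
  have hchain : Tendsto (fun j => dyadicChain (fun i => h (2 ^ j + i)) j) atTop (𝓝 0) :=
    (hsum.of_nonneg_of_le (fun _ => dyadicChain_nonneg _ _)
      fun _ => le_add_of_nonneg_left (norm_nonneg _)).tendsto_atTop_zero
  obtain ⟨l, hl⟩ := cauchySeq_tendsto_of_complete (cauchySeq_of_summable_dist hjump)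
  have hlog := tendsto_nat_log_atTop one_lt_two
  have hgap : Tendsto (fun N => h N - h (2 ^ Nat.log 2 N)) atTop (𝓝 0) := by
    refine squeeze_zero_norm' ?_ (hchain.comp hlog)
    filter_upwards [eventually_ne_atTop 0] with N hN
    have hlow := Nat.pow_log_le_self 2 hN
    have hhigh := Nat.lt_pow_succ_log_self one_lt_two N
    have := norm_sub_le_dyadicChain (fun i => h (2 ^ Nat.log 2 N + i))
      (d := N - 2 ^ Nat.log 2 N) (r := Nat.log 2 N) (by rw [pow_succ] at hhigh; omega)
    simpa [Nat.add_sub_cancel' hlow] using this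
  exact ⟨l, by simpa using (hl.comp hlog).add hgap⟩

lemma Continuous.integrable_of_compactSpace {X E : Type*} [TopologicalSpace X] [CompactSpace X]
    [MeasurableSpace X] [OpensMeasurableSpace X] [NormedAddCommGroup E] {μ : Measure X}
    [IsFiniteMeasure μ] {f : X → E} (hf : Continuous f) : Integrable f μ :=
  hf.integrable_of_hasCompactSupport (HasCompactSupport.of_compactSpace f)

section Integral

variable {X : Type*} [MeasurableSpace X] (μ : Measure X)

lemma integral_sqrt_le_sqrt_integral [IsProbabilityMeasure μ] {G : X → ℝ} (hG0 : ∀ t, 0 ≤ G t)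
    (hG : Integrable G μ) (hsqrt : Integrable (fun t => √(G t)) μ) :
    ∫ t, √(G t) ∂μ ≤ √(∫ t, G t ∂μ) :=
  Real.strictConcaveOn_sqrt.concaveOn.le_map_integral Real.continuous_sqrt.continuousOn isClosed_Ici
    (ae_of_all _ hG0) hG hsqrt

lemma ae_summable_of_summable_integral_s11 {Φ : ℕ → X → ℝ} (hΦ0 : ∀ j t, 0 ≤ Φ j t)
    (hΦ : ∀ j, Integrable (Φ j) μ) (hsum : Summable fun j => ∫ t, Φ j t ∂μ) :
    ∀ᵐ t ∂μ, Summable fun j => Φ j t := by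
  have hnorm : ∑' j, eLpNorm (Φ j) 1 μ ≠ ⊤ := by
    have : ∀ j, eLpNorm (Φ j) 1 μ = ENNReal.ofReal (∫ t, Φ j t ∂μ) := fun j => by
      rw [eLpNorm_one_eq_lintegral_enorm, ofReal_integral_eq_lintegral_ofReal (hΦ j)
        (ae_of_all _ (hΦ0 j))]
      exact lintegral_congr fun t => Real.enorm_of_nonneg (hΦ0 j t)
    simp_rw [this, ← ENNReal.ofReal_tsum_of_nonneg (fun j => integral_nonneg (hΦ0 j)) hsum]
    exact ENNReal.ofReal_ne_top
  filter_upwards [summable_norm_of_tsum_eLpNorm_ne_top le_rfl (fun j => (hΦ j).1) hnorm]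
    with t ht
  simpa [Real.norm_of_nonneg (hΦ0 _ t)] using ht

variable [TopologicalSpace X] [CompactSpace X] [OpensMeasurableSpace X] [IsProbabilityMeasure μ]
  {E : Type*} [NormedAddCommGroup E]

lemma integral_sqrt_sum_sq_norm_sub_le (h : ℕ → X → E) (hh : ∀ n, Continuous (h n)) (V : ℕ → ℝ)
    (c m : ℕ) (hV : ∀ k < m,
      ∫ t, ‖h ((k + 1) * c) t - h (k * c) t‖ ^ 2 ∂μ ≤ V ((k + 1) * c) - V (k * c)) :
    ∫ t, √(∑ k ∈ range m, ‖h ((k + 1) * c) t - h (k * c) t‖ ^ 2) ∂μ ≤ √(V (m * c) - V 0) := by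
  refine (integral_sqrt_le_sqrt_integral μ (fun t => sum_nonneg fun _ _ => sq_nonneg _)
    (Continuous.integrable_of_compactSpace (by fun_prop))
    (Continuous.integrable_of_compactSpace (by fun_prop))).trans (Real.sqrt_le_sqrt ?_)
  rw [integral_finsetSum _ fun k _ => Continuous.integrable_of_compactSpace (by fun_prop)]
  calc _ ≤ ∑ k ∈ range m, (V ((k + 1) * c) - V (k * c)) :=
        sum_le_sum fun k hk => hV k (mem_range.1 hk)
    _ = V (m * c) - V 0 := by rw [sum_range_sub (fun k => V (k * c)), zero_mul]

lemma integral_norm_sub_add_dyadicChain_le (h : ℕ → X → E) (hh : ∀ n, Continuous (h n))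
    (V : ℕ → ℝ) (r : ℕ)
    (hV : ∀ m m', m ≤ m' → m' ≤ 2 ^ r → ∫ t, ‖h m' t - h m t‖ ^ 2 ∂μ ≤ V m' - V m) :
    ∫ t, (‖h (2 ^ r) t - h 0 t‖ + dyadicChain (fun i => h i t) r) ∂μ ≤
      (r + 1) * √(V (2 ^ r) - V 0) := by
  have hjump : ∫ t, ‖h (2 ^ r) t - h 0 t‖ ∂μ ≤ √(V (2 ^ r) - V 0) := by
    simpa using integral_sqrt_sum_sq_norm_sub_le μ h hh V (2 ^ r) 1
      fun k hk => by simpa [Nat.lt_one_iff.1 hk] using hV 0 (2 ^ r) (Nat.zero_le _) le_rfl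
  have hlevel : ∀ ℓ ∈ range r,
      ∫ t, √(∑ k ∈ range (2 ^ (r - ℓ)), ‖h ((k + 1) * 2 ^ ℓ) t - h (k * 2 ^ ℓ) t‖ ^ 2) ∂μ ≤
        √(V (2 ^ r) - V 0) := by
    intro ℓ hℓ
    have hpow : 2 ^ (r - ℓ) * 2 ^ ℓ = 2 ^ r := by
      rw [← pow_add, Nat.sub_add_cancel (mem_range.1 hℓ).le]
    refine hpow ▸ integral_sqrt_sum_sq_norm_sub_le μ h hh V _ _ fun k hk =>
      hV _ _ (by gcongr; omega) (hpow ▸ Nat.mul_le_mul_right _ hk)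
  have hchain : ∫ t, dyadicChain (fun i => h i t) r ∂μ ≤ r * √(V (2 ^ r) - V 0) := by
    simp only [dyadicChain]
    rw [integral_finsetSum _ fun ℓ _ => Continuous.integrable_of_compactSpace (by fun_prop)]
    simpa using sum_le_sum hlevel
  rw [integral_add (Continuous.integrable_of_compactSpace (by fun_prop))
    (continuous_dyadicChain h hh r).integrable_of_compactSpace]
  linarith

end Integral

section Circle

variable {T : ℝ}

lemma integral_norm_sq_sum_fourier [Fact (0 < T)] (μ : Measure (AddCircle T)) [IsFiniteMeasure μ]
    (a : ℤ → ℂ) (F : Finset ℤ) :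
    ∫ t, ‖∑ n ∈ F, a n * fourier n t‖ ^ 2 ∂μ =
      (∑ n ∈ F, ∑ m ∈ F, a n * conj (a m) * ∫ t, fourier (n - m) t ∂μ).re := by
  have hexpand : ∀ t : AddCircle T, ‖∑ n ∈ F, a n * fourier n t‖ ^ 2 =
      RCLike.re (∑ n ∈ F, ∑ m ∈ F, a n * conj (a m) * fourier (n - m) t) := by
    intro t
    rw [← RCLike.ofReal_re (K := ℂ) (‖_‖ ^ 2), RCLike.ofReal_pow, ← RCLike.mul_conj, map_sum,
      sum_mul_sum]
    simp only [map_mul, ← fourier_neg, sub_eq_add_neg, fourier_add]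
    congr 1
    exact sum_congr rfl fun n _ => sum_congr rfl fun m _ => by ring
  have hint : ∀ n m : ℤ, Integrable (fun t => a n * conj (a m) * fourier (n - m) t) μ :=
    fun n m => Continuous.integrable_of_compactSpace (by fun_prop)
  rw [integral_congr_ae (ae_of_all _ hexpand),
    integral_re (integrable_finsetSum _ fun n _ => integrable_finsetSum _ fun m _ => hint n m),
    integral_finsetSum _ fun n _ => integrable_finsetSum _ fun m _ => hint n m]
  simp_rw [integral_finsetSum _ fun m _ => hint _ m, integral_const_mul]
  rfl

lemma integral_norm_sq_sum_fourier_le [Fact (0 < T)] (μ : Measure (AddCircle T)) [IsFiniteMeasure μ]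
    (a : ℤ → ℂ) (F : Finset ℤ) (R : ℝ)
    (hR : ∀ n ∈ F, ∑ m ∈ F, ‖∫ t, fourier (n - m) t ∂μ‖ ≤ R) :
    ∫ t, ‖∑ n ∈ F, a n * fourier n t‖ ^ 2 ∂μ ≤ R * ∑ n ∈ F, ‖a n‖ ^ 2 := by
  have hsymm : ∀ n m : ℤ, ‖∫ t, fourier (m - n) t ∂μ‖ = ‖∫ t, fourier (n - m) t ∂μ‖ := by
    intro n m
    rw [← neg_sub, ← RCLike.norm_conj, ← integral_conj]
    simp only [fourier_neg, RCLike.conj_conj]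
  rw [integral_norm_sq_sum_fourier]
  calc _ ≤ ‖∑ n ∈ F, ∑ m ∈ F, a n * conj (a m) * ∫ t, fourier (n - m) t ∂μ‖ :=
        Complex.re_le_norm _
    _ ≤ ∑ n ∈ F, ∑ m ∈ F, ‖a n‖ * ‖a m‖ * ‖∫ t, fourier (n - m) t ∂μ‖ := by
        refine (norm_sum_le _ _).trans (sum_le_sum fun n _ => (norm_sum_le _ _).trans_eq ?_)
        simp only [norm_mul, RCLike.norm_conj]
    _ ≤ R * ∑ n ∈ F, ‖a n‖ ^ 2 :=
        sum_sum_mul_le_of_row_sum_le F _ _ R (fun _ _ _ _ => norm_nonneg _) hR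
          fun m hm => by simpa only [hsymm] using hR m hm

def HasFourierDecay (μ : Measure (AddCircle T)) (K α : ℝ) : Prop :=
  ∀ n : ℤ, n ≠ 0 → ‖∫ x, fourier (-n) x ∂μ‖ ≤ K * |(n : ℝ)| ^ (-α)

lemma sum_Icc_norm_integral_fourier_le (μ : Measure (AddCircle T)) [IsProbabilityMeasure μ]
    {K α s : ℝ} (hK : 0 ≤ K) (hdecay : HasFourierDecay μ K α)
    (hs0 : 0 < s) (hs1 : s ≤ 1) (hαs : 1 - α ≤ s) (L : ℕ) :
    ∑ d ∈ Icc (-(L : ℤ)) L, ‖∫ x, fourier d x ∂μ‖ ≤ 1 + 2 * K * L ^ s / s := by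
  have hdecay' : ∀ k : ℕ, ‖∫ x, fourier (k + 1 : ℤ) x ∂μ‖ + ‖∫ x, fourier (-(k + 1 : ℤ)) x ∂μ‖
      ≤ 2 * K * ((k : ℝ) + 1) ^ (s - 1) := by
    intro k
    have hk : |((k + 1 : ℤ) : ℝ)| = (k : ℝ) + 1 := by push_cast; exact abs_of_pos (by positivity)
    have hpow : ((k : ℝ) + 1) ^ (-α) ≤ ((k : ℝ) + 1) ^ (s - 1) :=
      Real.rpow_le_rpow_of_exponent_le (by linarith [k.cast_nonneg (α := ℝ)]) (by linarith)
    have h₁ := hdecay (-(k + 1)) (by omega)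
    have h₂ := hdecay (k + 1) (by omega)
    rw [neg_neg, Int.cast_neg, abs_neg, hk] at h₁
    rw [hk] at h₂
    nlinarith
  rw [sum_Icc_neg_eq_add_sum_range, mul_div_assoc]
  calc _ ≤ 1 + ∑ k ∈ range L, 2 * K * ((k : ℝ) + 1) ^ (s - 1) := by
        gcongr with k
        · simp
        · exact hdecay' k
    _ ≤ 1 + 2 * K * (L ^ s / s) := by
        rw [← mul_sum]
        gcongr
        exact sum_range_rpow_sub_one_le hs0 hs1 L

lemma integral_norm_sq_sum_fourier_le_of_band [Fact (0 < T)] (μ : Measure (AddCircle T))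
    [IsProbabilityMeasure μ] {K α s p : ℝ} (hK : 0 ≤ K) (hdecay : HasFourierDecay μ K α)
    (hs0 : 0 < s) (hs1 : s ≤ 1) (hαs : 1 - α ≤ s) (hp : 0 ≤ p) (a : ℤ → ℂ) (F : Finset ℤ)
    {M : ℕ} (hM : 0 < M) (hF : ∀ n ∈ F, M < |n| ∧ |n| ≤ 2 * M) :
    ∫ t, ‖∑ n ∈ F, a n * fourier n t‖ ^ 2 ∂μ ≤
      (1 + 8 * K / s) * (M : ℝ) ^ (s - 2 * p) * ∑ n ∈ F, ‖a n‖ ^ 2 * (1 + (n : ℝ) ^ 2) ^ p := by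
  have hM1 : (1 : ℝ) ≤ M := by exact_mod_cast hM
  have hMs : 1 ≤ (M : ℝ) ^ s := Real.one_le_rpow hM1 hs0.le
  have hF' : ∀ n ∈ F, |n| ≤ ((2 * M : ℕ) : ℤ) := fun n hn => by push_cast; exact (hF n hn).2
  have hrow : ∀ n ∈ F, ∑ m ∈ F, ‖∫ t, fourier (n - m) t ∂μ‖ ≤ (1 + 8 * K / s) * (M : ℝ) ^ s := by
    intro n hn
    refine (sum_sub_le_sum_Icc _ (fun _ => norm_nonneg _) hF' (hF' n hn)).trans <|
      (sum_Icc_norm_integral_fourier_le μ hK hdecay hs0 hs1 hαs _).trans ?_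
    have h4 : ((2 * (2 * M) : ℕ) : ℝ) ^ s ≤ 4 * (M : ℝ) ^ s := by
      push_cast
      rw [← mul_assoc, show (2 : ℝ) * 2 = 4 by norm_num,
        Real.mul_rpow (by norm_num) (by positivity)]
      gcongr
      exact Real.rpow_le_self_of_one_le (by norm_num) hs1
    calc 1 + 2 * K * ((2 * (2 * M) : ℕ) : ℝ) ^ s / s ≤ (M : ℝ) ^ s + 2 * K * (4 * M ^ s) / s := by
          gcongr
      _ = (1 + 8 * K / s) * (M : ℝ) ^ s := by ring
  have hweight : ∀ n ∈ F,
      ‖a n‖ ^ 2 ≤ (M : ℝ) ^ (-(2 * p)) * (‖a n‖ ^ 2 * (1 + (n : ℝ) ^ 2) ^ p) := by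
    intro n hn
    have hMn : (M : ℝ) ^ 2 ≤ 1 + (n : ℝ) ^ 2 := by
      have : (M : ℝ) ≤ |(n : ℝ)| := by exact_mod_cast (hF n hn).1.le
      nlinarith [sq_abs (n : ℝ), abs_nonneg (n : ℝ)]
    have : (M : ℝ) ^ (2 * p) ≤ (1 + (n : ℝ) ^ 2) ^ p := by
      rw [Real.rpow_mul (by positivity)]
      norm_cast
      gcongr
      exact_mod_cast hMn
    rw [Real.rpow_neg (by positivity), ← mul_assoc, mul_comm _ (‖a n‖ ^ 2), mul_assoc]
    refine le_mul_of_one_le_right (sq_nonneg _) ?_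
    rw [inv_mul_eq_div, one_le_div (by positivity)]
    exact this
  calc _ ≤ (1 + 8 * K / s) * (M : ℝ) ^ s * ∑ n ∈ F, ‖a n‖ ^ 2 :=
        integral_norm_sq_sum_fourier_le μ a F _ hrow
    _ ≤ (1 + 8 * K / s) * (M : ℝ) ^ s *
          ((M : ℝ) ^ (-(2 * p)) * ∑ n ∈ F, ‖a n‖ ^ 2 * (1 + (n : ℝ) ^ 2) ^ p) := by
        rw [mul_sum (s := F) (a := (M : ℝ) ^ (-(2 * p)))]
        exact mul_le_mul_of_nonneg_left (sum_le_sum hweight) (by positivity)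
    _ = _ := by
        rw [sub_eq_add_neg, Real.rpow_add (by positivity)]
        ring

noncomputable def fourierPartialSum (a : ℤ → ℂ) (N : ℕ) (t : AddCircle T) : ℂ :=
  ∑ n ∈ Icc (-(N : ℤ)) N, a n * fourier n t

lemma continuous_fourierPartialSum (a : ℤ → ℂ) (N : ℕ) :
    Continuous (fourierPartialSum (T := T) a N) :=
  continuous_finsetSum _ fun n _ => continuous_const.mul (fourier n).continuous

lemma integral_norm_sq_fourierPartialSum_sub_le [Fact (0 < T)] (μ : Measure (AddCircle T))
    [IsProbabilityMeasure μ] {K α s p : ℝ} (hK : 0 ≤ K) (hdecay : HasFourierDecay μ K α)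
    (hs0 : 0 < s) (hs1 : s ≤ 1) (hαs : 1 - α ≤ s) (hp : 0 ≤ p) (a : ℤ → ℂ)
    {M m m' : ℕ} (hM : 0 < M) (hMm : M ≤ m) (hmm' : m ≤ m') (hm' : m' ≤ 2 * M) :
    ∫ t, ‖fourierPartialSum a m' t - fourierPartialSum a m t‖ ^ 2 ∂μ ≤
      (1 + 8 * K / s) * (M : ℝ) ^ (s - 2 * p) *
        (∑ n ∈ Icc (-(m' : ℤ)) m', ‖a n‖ ^ 2 * (1 + (n : ℝ) ^ 2) ^ p -
          ∑ n ∈ Icc (-(m : ℤ)) m, ‖a n‖ ^ 2 * (1 + (n : ℝ) ^ 2) ^ p) := by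
  have hband : ∀ n ∈ Icc (-(m' : ℤ)) m' \ Icc (-(m : ℤ)) m, (M : ℤ) < |n| ∧ |n| ≤ 2 * M := by
    intro n hn
    simp only [Finset.mem_sdiff, mem_Icc] at hn
    constructor <;> cases abs_cases n <;> omega
  have hsub : Icc (-(m : ℤ)) m ⊆ Icc (-(m' : ℤ)) m' := Icc_subset_Icc (by omega) (by omega)
  have hS : ∀ t : AddCircle T, fourierPartialSum a m' t - fourierPartialSum a m t =
      ∑ n ∈ Icc (-(m' : ℤ)) m' \ Icc (-(m : ℤ)) m, a n * fourier n t :=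
    fun t => (sum_sdiff_eq_sub hsub).symm
  simp only [hS, ← sum_sdiff_eq_sub hsub]
  exact integral_norm_sq_sum_fourier_le_of_band μ hK hdecay hs0 hs1 hαs hp a _ hM hband

lemma integral_fourierPartialSum_dyadic_le [Fact (0 < T)] (μ : Measure (AddCircle T))
    [IsProbabilityMeasure μ]
    {K α s p : ℝ} (hK : 0 ≤ K) (hdecay : HasFourierDecay μ K α)
    (hs0 : 0 < s) (hs1 : s ≤ 1) (hαs : 1 - α ≤ s) (hp : 0 ≤ p) (a : ℤ → ℂ)
    (hsob : Summable fun n : ℤ => ‖a n‖ ^ 2 * (1 + (n : ℝ) ^ 2) ^ p) (j : ℕ) :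
    ∫ t, (‖fourierPartialSum a (2 ^ (j + 1)) t - fourierPartialSum a (2 ^ j) t‖ +
        dyadicChain (fun i => fourierPartialSum a (2 ^ j + i) t) j) ∂μ ≤
      (j + 1) * √((1 + 8 * K / s) * ∑' n : ℤ, ‖a n‖ ^ 2 * (1 + (n : ℝ) ^ 2) ^ p) *
        ((2 : ℝ) ^ (s / 2 - p)) ^ j := by
  set C := 1 + 8 * K / s
  set E : ℕ → ℝ := fun N => ∑ n ∈ Icc (-(N : ℤ)) N, ‖a n‖ ^ 2 * (1 + (n : ℝ) ^ 2) ^ p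
  have hE0 : ∀ N, 0 ≤ E N := fun N => sum_nonneg fun n _ => by positivity
  have hEle : ∀ N, E N ≤ ∑' n : ℤ, ‖a n‖ ^ 2 * (1 + (n : ℝ) ^ 2) ^ p :=
    fun N => hsob.sum_le_tsum _ fun n _ => by positivity
  have hscale : ((2 ^ j : ℕ) : ℝ) ^ (s - 2 * p) = (((2 : ℝ) ^ (s / 2 - p)) ^ j) ^ 2 := by
    calc ((2 ^ j : ℕ) : ℝ) ^ (s - 2 * p) = ((2 : ℝ) ^ ((s / 2 - p) * (2 : ℕ))) ^ j := by
          rw [Real.rpow_pow_comm (by norm_num)]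
          push_cast
          ring_nf
      _ = (((2 : ℝ) ^ (s / 2 - p)) ^ j) ^ 2 := by
          rw [Real.rpow_mul_natCast (by norm_num), ← pow_mul, ← pow_mul, mul_comm]
  have hchain := integral_norm_sub_add_dyadicChain_le μ (fun i => fourierPartialSum a (2 ^ j + i))
    (fun _ => continuous_fourierPartialSum _ _)
    (fun i => C * ((2 ^ j : ℕ) : ℝ) ^ (s - 2 * p) * E (2 ^ j + i)) j fun m m' hmm' hm' => by
      rw [← mul_sub]
      exact integral_norm_sq_fourierPartialSum_sub_le μ hK hdecay hs0 hs1 hαs hp a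
        (by positivity) (Nat.le_add_right _ _) (by omega) (by rw [two_mul]; omega)
  rw [add_zero, ← two_mul, ← pow_succ'] at hchain
  calc _ ≤ _ := hchain
    _ ≤ (j + 1) * (√(C * ∑' n : ℤ, ‖a n‖ ^ 2 * (1 + (n : ℝ) ^ 2) ^ p) *
          ((2 : ℝ) ^ (s / 2 - p)) ^ j) := by
        rw [← mul_sub, hscale, mul_comm C, mul_assoc, Real.sqrt_mul (by positivity),
          Real.sqrt_sq (by positivity), mul_comm _ (_ ^ j)]
        gcongr
        linarith [hEle (2 ^ (j + 1)), hE0 (2 ^ j)]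
    _ = _ := by ring

end Circle

theorem fourier_series_converges_ae_of_sobolev_general
    (μ : Measure UnitAddCircle) [IsProbabilityMeasure μ]
    (K α : ℝ) (hK : 0 < K) (hα0 : 0 ≤ α) (hα1 : α ≤ 1)
    (hdecay : ∀ n : ℤ, n ≠ 0 → ‖∫ x, fourier (-n) x ∂μ‖ ≤ K * |(n : ℝ)| ^ (-α))
    (f : UnitAddCircle → ℂ)
    (p : ℝ) (hp : p > (1 - α) / 2)
    (hSobolev : Summable (fun n : ℤ => ‖fourierCoeff f n‖ ^ 2 * (1 + (n : ℝ) ^ 2) ^ p)) :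
    ∀ᵐ t ∂μ, ∃ l : ℂ,
      Tendsto (fun N : ℕ =>
          ∑ n ∈ Finset.Icc (-(N : ℤ)) (N : ℤ), fourierCoeff f n * fourier n t)
        atTop (nhds l) := by
  -- `s` must dominate `1 - α`, the growth exponent of the row sums of `|μ̂|`, and stay below the
  -- Sobolev gain `2p`.
  obtain ⟨s, hs0, hs1, hαs, hsp⟩ : ∃ s : ℝ, 0 < s ∧ s ≤ 1 ∧ 1 - α ≤ s ∧ s < 2 * p :=
    ⟨min 1 ((1 - α) / 2 + p), lt_min one_pos (by linarith), min_le_left _ _,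
      le_min (by linarith) (by linarith), (min_le_right _ _).trans_lt (by linarith)⟩
  have hρ : (2 : ℝ) ^ (s / 2 - p) < 1 := Real.rpow_lt_one_of_one_lt_of_neg one_lt_two (by linarith)
  set S := fourierPartialSum (fourierCoeff f)
  have hS := continuous_fourierPartialSum (T := 1) (fourierCoeff f)
  have hae := ae_summable_of_summable_integral_s11 μ
    (Φ := fun j t => ‖S (2 ^ (j + 1)) t - S (2 ^ j) t‖ + dyadicChain (fun i => S (2 ^ j + i) t) j)
    (fun _ _ => add_nonneg (norm_nonneg _) (dyadicChain_nonneg _ _))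
    (fun j => (((hS _).sub (hS _)).norm.add
      (continuous_dyadicChain _ (fun _ => hS _) j)).integrable_of_compactSpace)
    (((summable_natCast_add_one_mul_geometric (by positivity) hρ).mul_left _).of_nonneg_of_le
      (fun _ => integral_nonneg fun _ => add_nonneg (norm_nonneg _) (dyadicChain_nonneg _ _))
      fun j => (integral_fourierPartialSum_dyadic_le μ hK.le hdecay hs0 hs1 hαs (by linarith) _
        hSobolev j).trans_eq (by ring))
  filter_upwards [hae] with t ht
  exact exists_tendsto_of_summable_dyadicChain (fun N => S N t) ht

/-- If `0 ≤ a ≤ 1`, `μ` is a Borel probability measure on the circle with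
`|μ̂(n)| ≤ K|n|^{-a}` for `n ≠ 0`, and `f ∈ L²(𝕋)` belongs to the Sobolev space
`H^p(𝕋)` for some `p > (1-a)/2`, then the Fourier series of `f` converges
`μ`-almost everywhere (symmetric partial sums). -/
theorem fourier_series_converges_ae_of_sobolev
    (μ : Measure UnitAddCircle) [IsProbabilityMeasure μ]
    (K α : ℝ) (hK : 0 < K) (hα0 : 0 ≤ α) (hα1 : α ≤ 1)
    (hdecay : ∀ n : ℤ, n ≠ 0 → ‖∫ x, fourier (-n) x ∂μ‖ ≤ K * |(n : ℝ)| ^ (-α))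
    (f : UnitAddCircle → ℂ) (hf : MemLp f 2 (volume : Measure UnitAddCircle))
    (p : ℝ) (hp : p > (1 - α) / 2)
    (hSobolev : Summable (fun n : ℤ => ‖fourierCoeff f n‖ ^ 2 * (1 + (n : ℝ) ^ 2) ^ p)) :
    ∀ᵐ t ∂μ, ∃ l : ℂ,
      Tendsto (fun N : ℕ =>
          ∑ n ∈ Finset.Icc (-(N : ℤ)) (N : ℤ), fourierCoeff f n * fourier n t)
        atTop (nhds l) :=
  fourier_series_converges_ae_of_sobolev_general μ K α hK hα0 hα1 hdecay f p hp hSobolev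
end

section
/- Let (a_n)_{n≥1} be a sequence of complex numbers and (X_n)_{n≥1} a sequence of complex-valued random variables with E(|X_n|²) = 1 for all n, and assume L := Σ_{n,m=1}^∞ |a_n| |a_m| |E(X_n · conj(X_m))| · log₂(n+1) · log₂(m+1) < ∞. For k = 0, 1, 2, … define the block maxima S°_k = max_{2^k ≤ j < 2^{k+1}} |Σ_{n=2^k}^j a_n X_n|. Then Σ_{k=0}^∞ E( (S°_k)² ) ≤ 4 L, and consequently S°_k → 0 almost surely as k → ∞. -/
/-!
An initial segment of the dyadic block `[2^k, 2^(k+1))` is a sum of at most `k + 1` dyadic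
subblocks, one per level, so by Cauchy–Schwarz `(S°_k)²` is at most `k + 1` times the sum `V_k` of
the squared sums over all dyadic subblocks (Menshov–Rademacher). Expanding the square, the second
moment of a sum over a subblock is at most the sum of `|E(Y_n conj Y_m)|` over pairs in the
subblock, and the subblocks of one level are disjoint, so
`E((S°_k)²) ≤ (k + 1)² Σ_{n,m in block k} |E(Y_n conj Y_m)|` with `Y_n = a_n X_n`. As
`k + 1 ≤ 2 log₂(n + 1)` for `n` in block `k`, summing over `k` gives `4 L`. Finally,
`Σ_k E((S°_k)²) < ∞` forces `(S°_k)² → 0` almost surely.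
-/

open MeasureTheory Filter Topology Function Finset
open scoped ENNReal ComplexConjugate

lemma add_sq_le_mul_add_of_sq_le {x y P Q c : ℝ} (hc : 0 < c) (hx : x ^ 2 ≤ P)
    (hy : y ^ 2 ≤ c * Q) : (x + y) ^ 2 ≤ (c + 1) * (P + Q) := by
  refine le_of_mul_le_mul_left ?_ hc
  nlinarith [sq_nonneg (c * x - y), mul_le_mul_of_nonneg_left hx (by positivity : 0 ≤ c * (c + 1)),
    mul_le_mul_of_nonneg_left hy (by positivity : 0 ≤ c + 1)]

section Dyadic

variable {E : Type*} [SeminormedAddCommGroup E]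

/-- `dyadicSqSum f k b` is the sum of `‖∑ n ∈ I, f n‖ ^ 2` over all dyadic subintervals `I` of
`[b, b + 2 ^ k)`. -/
noncomputable def dyadicSqSum (f : ℕ → E) : ℕ → ℕ → ℝ
  | 0, b => ‖f b‖ ^ 2
  | k + 1, b => ‖∑ n ∈ Ico b (b + 2 ^ (k + 1)), f n‖ ^ 2 +
      dyadicSqSum f k b + dyadicSqSum f k (b + 2 ^ k)

lemma dyadicSqSum_nonneg (f : ℕ → E) (k b : ℕ) : 0 ≤ dyadicSqSum f k b := by
  induction k generalizing b with
  | zero => exact sq_nonneg _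
  | succ k ih =>
    have := ih b
    have := ih (b + 2 ^ k)
    simp only [dyadicSqSum]
    positivity

lemma sq_norm_sum_Ico_le_dyadicSqSum (f : ℕ → E) (k b : ℕ) :
    ‖∑ n ∈ Ico b (b + 2 ^ k), f n‖ ^ 2 ≤ dyadicSqSum f k b := by
  cases k with
  | zero => simp [dyadicSqSum]
  | succ k =>
    have := dyadicSqSum_nonneg f k b
    have := dyadicSqSum_nonneg f k (b + 2 ^ k)
    simp only [dyadicSqSum]
    linarith

theorem sq_norm_sum_Ico_le_mul_dyadicSqSum (f : ℕ → E) (k b e : ℕ) (he : e ≤ b + 2 ^ k) :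
    ‖∑ n ∈ Ico b e, f n‖ ^ 2 ≤ (k + 1) * dyadicSqSum f k b := by
  induction k generalizing b e with
  | zero =>
    rcases Nat.lt_or_ge e (b + 1) with h | h
    · simp [Ico_eq_empty_of_le (by omega : e ≤ b), dyadicSqSum_nonneg]
    · simp [dyadicSqSum, show e = b + 1 by omega]
  | succ k ih =>
    have hV₁ := dyadicSqSum_nonneg f k b
    have hV₂ := dyadicSqSum_nonneg f k (b + 2 ^ k)
    have hV : dyadicSqSum f (k + 1) b =
        ‖∑ n ∈ Ico b (b + 2 ^ (k + 1)), f n‖ ^ 2 + dyadicSqSum f k b +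
          dyadicSqSum f k (b + 2 ^ k) := rfl
    have hV_le : dyadicSqSum f k b + dyadicSqSum f k (b + 2 ^ k) ≤ dyadicSqSum f (k + 1) b := by
      rw [hV]; linarith [sq_nonneg ‖∑ n ∈ Ico b (b + 2 ^ (k + 1)), f n‖]
    push_cast
    rcases Nat.lt_or_ge e (b + 2 ^ k) with h | h
    · nlinarith [ih b e h.le]
    · have hsplit : ‖∑ n ∈ Ico b e, f n‖ ≤
          ‖∑ n ∈ Ico b (b + 2 ^ k), f n‖ + ‖∑ n ∈ Ico (b + 2 ^ k) e, f n‖ := by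
        rw [← sum_Ico_consecutive f (Nat.le_add_right b (2 ^ k)) h]
        exact norm_add_le _ _
      calc ‖∑ n ∈ Ico b e, f n‖ ^ 2
          ≤ (‖∑ n ∈ Ico b (b + 2 ^ k), f n‖ + ‖∑ n ∈ Ico (b + 2 ^ k) e, f n‖) ^ 2 :=
            pow_le_pow_left₀ (norm_nonneg _) hsplit 2
        _ ≤ (k + 1 + 1) * (dyadicSqSum f k b + dyadicSqSum f k (b + 2 ^ k)) :=
            add_sq_le_mul_add_of_sq_le (by positivity) (sq_norm_sum_Ico_le_dyadicSqSum f k b)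
              (ih (b + 2 ^ k) e (by rw [pow_succ] at he; omega))
        _ ≤ (k + 1 + 1) * dyadicSqSum f (k + 1) b := by gcongr

/-- The block maximum `S°_k` of the paper. -/
noncomputable def dyadicBlockMax (f : ℕ → E) (k : ℕ) : ℝ :=
  (Ico (2 ^ k) (2 ^ (k + 1))).sup' (nonempty_Ico.mpr (Nat.pow_lt_pow_succ one_lt_two))
    fun j => ‖∑ n ∈ Icc (2 ^ k) j, f n‖

lemma dyadicBlockMax_nonneg (f : ℕ → E) (k : ℕ) : 0 ≤ dyadicBlockMax f k :=
  le_sup'_of_le _ (left_mem_Ico.mpr (Nat.pow_lt_pow_succ one_lt_two)) (norm_nonneg _)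

lemma sq_dyadicBlockMax_le (f : ℕ → E) (k : ℕ) :
    dyadicBlockMax f k ^ 2 ≤ (k + 1) * dyadicSqSum f k (2 ^ k) := by
  obtain ⟨j, hj, hmax⟩ := exists_mem_eq_sup' (nonempty_Ico.mpr (Nat.pow_lt_pow_succ one_lt_two))
    fun j => ‖∑ n ∈ Icc (2 ^ k) j, f n‖
  rw [dyadicBlockMax, hmax, ← Ico_add_one_right_eq_Icc]
  rw [mem_Ico, Nat.two_pow_succ] at hj
  exact sq_norm_sum_Ico_le_mul_dyadicSqSum f k _ _ hj.2

end Dyadic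

section SecondMoment

variable {Ω ι 𝕜 : Type*} [MeasurableSpace Ω] {μ : Measure Ω} [RCLike 𝕜]

noncomputable def crossMomentSum (μ : Measure Ω) (Y : ι → Ω → 𝕜) (s : Finset ι) : ℝ :=
  ∑ i ∈ s, ∑ j ∈ s, ‖∫ ω, Y i ω * conj (Y j ω) ∂μ‖

lemma crossMomentSum_add_le [DecidableEq ι] (Y : ι → Ω → 𝕜) {s t : Finset ι}
    (h : Disjoint s t) :
    crossMomentSum μ Y s + crossMomentSum μ Y t ≤ crossMomentSum μ Y (s ∪ t) := by
  simp only [crossMomentSum, ← sum_product']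
  rw [← sum_union (disjoint_product.mpr (Or.inl h))]
  refine sum_le_sum_of_subset_of_nonneg ?_ fun _ _ _ => norm_nonneg _
  exact union_subset (product_subset_product subset_union_left subset_union_left)
    (product_subset_product subset_union_right subset_union_right)

lemma integrable_sq_norm_sum (Y : ι → Ω → 𝕜) (s : Finset ι) (hY : ∀ i ∈ s, MemLp (Y i) 2 μ) :
    Integrable (fun ω => ‖∑ i ∈ s, Y i ω‖ ^ 2) μ :=
  (memLp_finsetSum s hY).integrable_norm_pow two_ne_zero

lemma integral_sq_norm_sum_le_crossMomentSum (Y : ι → Ω → 𝕜) (s : Finset ι)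
    (hY : ∀ i ∈ s, MemLp (Y i) 2 μ) :
    ∫ ω, ‖∑ i ∈ s, Y i ω‖ ^ 2 ∂μ ≤ crossMomentSum μ Y s := by
  have hprod : ∀ i ∈ s, ∀ j ∈ s, Integrable (fun ω => Y i ω * conj (Y j ω)) μ :=
    fun i hi j hj => (hY i hi).integrable_mul (hY j hj).star
  have hsq : ∀ ω, ((‖∑ i ∈ s, Y i ω‖ ^ 2 : ℝ) : 𝕜) =
      ∑ i ∈ s, ∑ j ∈ s, Y i ω * conj (Y j ω) := fun ω => by
    rw [RCLike.ofReal_pow, ← RCLike.mul_conj, map_sum, sum_mul_sum]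
  calc ∫ ω, ‖∑ i ∈ s, Y i ω‖ ^ 2 ∂μ
      ≤ ‖((∫ ω, ‖∑ i ∈ s, Y i ω‖ ^ 2 ∂μ : ℝ) : 𝕜)‖ := by
        rw [RCLike.norm_ofReal]; exact le_abs_self _
    _ = ‖∑ i ∈ s, ∑ j ∈ s, ∫ ω, Y i ω * conj (Y j ω) ∂μ‖ := by
        rw [← integral_ofReal, integral_congr_ae (ae_of_all _ hsq),
          integral_finsetSum _ fun i hi => integrable_finsetSum _ (hprod i hi)]
        exact congrArg _ (sum_congr rfl fun i hi => integral_finsetSum _ (hprod i hi))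
    _ ≤ crossMomentSum μ Y s :=
        (norm_sum_le _ _).trans (sum_le_sum fun i _ => norm_sum_le _ _)

lemma Ico_dyadic_subset_left (b k : ℕ) : Ico b (b + 2 ^ k) ⊆ Ico b (b + 2 ^ (k + 1)) :=
  Ico_subset_Ico_right (by rw [pow_succ]; omega)

lemma Ico_dyadic_subset_right (b k : ℕ) :
    Ico (b + 2 ^ k) (b + 2 ^ k + 2 ^ k) ⊆ Ico b (b + 2 ^ (k + 1)) :=
  Ico_subset_Ico (Nat.le_add_right b _) (by rw [pow_succ]; omega)

lemma integrable_dyadicSqSum (Y : ℕ → Ω → 𝕜) (k b : ℕ)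
    (hY : ∀ n ∈ Ico b (b + 2 ^ k), MemLp (Y n) 2 μ) :
    Integrable (fun ω => dyadicSqSum (Y · ω) k b) μ := by
  induction k generalizing b with
  | zero => simpa [dyadicSqSum] using integrable_sq_norm_sum Y {b} (by simpa using hY)
  | succ k ih =>
    exact ((integrable_sq_norm_sum Y _ hY).fun_add
      (ih b fun n hn => hY n (Ico_dyadic_subset_left b k hn))).fun_add
      (ih (b + 2 ^ k) fun n hn => hY n (Ico_dyadic_subset_right b k hn))

lemma integral_dyadicSqSum_le (Y : ℕ → Ω → 𝕜) (k b : ℕ)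
    (hY : ∀ n ∈ Ico b (b + 2 ^ k), MemLp (Y n) 2 μ) :
    ∫ ω, dyadicSqSum (Y · ω) k b ∂μ ≤ (k + 1) * crossMomentSum μ Y (Ico b (b + 2 ^ k)) := by
  induction k generalizing b with
  | zero =>
    simpa [dyadicSqSum] using integral_sq_norm_sum_le_crossMomentSum Y {b} (by simpa using hY)
  | succ k ih =>
    have hY₁ : ∀ n ∈ Ico b (b + 2 ^ k), MemLp (Y n) 2 μ :=
      fun n hn => hY n (Ico_dyadic_subset_left b k hn)
    have hY₂ : ∀ n ∈ Ico (b + 2 ^ k) (b + 2 ^ k + 2 ^ k), MemLp (Y n) 2 μ :=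
      fun n hn => hY n (Ico_dyadic_subset_right b k hn)
    have hsplit : crossMomentSum μ Y (Ico b (b + 2 ^ k)) +
        crossMomentSum μ Y (Ico (b + 2 ^ k) (b + 2 ^ k + 2 ^ k)) ≤
          crossMomentSum μ Y (Ico b (b + 2 ^ (k + 1))) := by
      rw [pow_succ, mul_two, ← add_assoc,
        ← Ico_union_Ico_eq_Ico (Nat.le_add_right b _) (Nat.le_add_right _ _)]
      exact crossMomentSum_add_le Y (Ico_disjoint_Ico_consecutive _ _ _)
    have h₀ := integral_sq_norm_sum_le_crossMomentSum Y _ hY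
    have h₁ := ih b hY₁
    have h₂ := ih _ hY₂
    simp only [dyadicSqSum]
    rw [integral_add ((integrable_sq_norm_sum Y _ hY).fun_add (integrable_dyadicSqSum Y k b hY₁))
        (integrable_dyadicSqSum Y k _ hY₂),
      integral_add (integrable_sq_norm_sum Y _ hY) (integrable_dyadicSqSum Y k b hY₁)]
    push_cast
    nlinarith

lemma aemeasurable_dyadicBlockMax (Y : ℕ → Ω → 𝕜) (k : ℕ)
    (hY : ∀ n ∈ Ico (2 ^ k) (2 ^ (k + 1)), AEMeasurable (Y n) μ) :
    AEMeasurable (fun ω => dyadicBlockMax (Y · ω) k) μ := by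
  have hsup : (fun ω => dyadicBlockMax (Y · ω) k) = (Ico (2 ^ k) (2 ^ (k + 1))).sup'
      (nonempty_Ico.mpr (Nat.pow_lt_pow_succ one_lt_two))
      fun j ω => ‖∑ n ∈ Icc (2 ^ k) j, Y n ω‖ := by
    ext ω; simp only [dyadicBlockMax, Finset.sup'_apply]
  rw [hsup]
  refine sup'_induction (p := (AEMeasurable · μ)) _ _ (fun _ hf _ hg => hf.sup hg) fun j hj => ?_
  refine (Finset.aemeasurable_fun_sum _ fun n hn => hY n ?_).norm
  rw [mem_Icc] at hn; rw [mem_Ico] at hj ⊢; omega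

lemma lintegral_sq_dyadicBlockMax_le (Y : ℕ → Ω → 𝕜) (k : ℕ)
    (hY : ∀ n ∈ Ico (2 ^ k) (2 ^ (k + 1)), MemLp (Y n) 2 μ) :
    ∫⁻ ω, ENNReal.ofReal (dyadicBlockMax (Y · ω) k ^ 2) ∂μ ≤
      ENNReal.ofReal ((k + 1) ^ 2 * crossMomentSum μ Y (Ico (2 ^ k) (2 ^ (k + 1)))) := by
  rw [Nat.two_pow_succ] at hY ⊢
  calc ∫⁻ ω, ENNReal.ofReal (dyadicBlockMax (Y · ω) k ^ 2) ∂μ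
      ≤ ∫⁻ ω, ENNReal.ofReal ((k + 1) * dyadicSqSum (Y · ω) k (2 ^ k)) ∂μ :=
        lintegral_mono fun ω => ENNReal.ofReal_le_ofReal (sq_dyadicBlockMax_le _ k)
    _ = ENNReal.ofReal (∫ ω, (k + 1) * dyadicSqSum (Y · ω) k (2 ^ k) ∂μ) :=
        (ofReal_integral_eq_lintegral_ofReal ((integrable_dyadicSqSum Y k _ hY).const_mul _)
          (ae_of_all _ fun ω => by have := dyadicSqSum_nonneg (Y · ω) k (2 ^ k); positivity)).symm
    _ ≤ _ := by
        rw [integral_const_mul, sq, mul_assoc]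
        gcongr
        exact integral_dyadicSqSum_le Y k _ hY

end SecondMoment

section Summation

lemma add_one_le_two_mul_logb {k n : ℕ} (hn : 2 ^ k ≤ n) :
    (k + 1 : ℝ) ≤ 2 * Real.logb 2 (n + 1) := by
  have hpow : ((2 ^ k : ℕ) : ℝ) ≤ n := by exact_mod_cast hn
  have hk : (k : ℝ) ≤ Real.logb 2 (n + 1) := by
    rw [Real.le_logb_iff_rpow_le one_lt_two (by positivity), Real.rpow_natCast]
    push_cast at hpow; linarith
  have h1 : (1 : ℝ) ≤ Real.logb 2 (n + 1) := by
    rw [Real.le_logb_iff_rpow_le one_lt_two (by positivity), Real.rpow_one]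
    have : (1 : ℝ) ≤ n := by exact_mod_cast Nat.one_le_two_pow.trans hn
    linarith
  linarith

lemma ENNReal.tsum_sum_le_tsum_of_pairwise_disjoint {α ι : Type*} (f : α → ℝ≥0∞)
    {s : ι → Finset α} (hs : Pairwise (Disjoint on s)) :
    ∑' i, ∑ a ∈ s i, f a ≤ ∑' a, f a := by
  have hdisj : Set.univ.PairwiseDisjoint fun i => (s i : Set α) :=
    fun i _ j _ hij => Finset.disjoint_coe.mpr (hs hij)
  calc ∑' i, ∑ a ∈ s i, f a = ∑' i, ∑' a : (s i : Set α), f a :=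
        tsum_congr fun i => (Finset.tsum_subtype (s i) f).symm
    _ = ∑' a : ⋃ i, (s i : Set α), f a := (ENNReal.tsum_biUnion hdisj).symm
    _ ≤ ∑' a, f a := ENNReal.tsum_comp_le_tsum_of_injective Subtype.val_injective f

lemma pairwise_disjoint_Ico_two_pow :
    Pairwise (Disjoint on fun k => Ico (2 ^ k) (2 ^ (k + 1))) := by
  intro k l hkl
  refine Finset.disjoint_left.mpr fun n hk hl => hkl ?_
  rw [mem_Ico] at hk hl
  rw [← Nat.log_eq_of_pow_le_of_lt_pow hk.1 hk.2, ← Nat.log_eq_of_pow_le_of_lt_pow hl.1 hl.2]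

lemma tsum_tsum_pnat_eq_of_eq_zero {M : Type*} [AddCommMonoid M] [TopologicalSpace M]
    (F : ℕ → ℕ → M) (h₁ : ∀ m, F 0 m = 0) (h₂ : ∀ n, F n 0 = 0) :
    ∑' (n : ℕ+) (m : ℕ+), F n m = ∑' (n) (m), F n m := by
  simp_rw [tsum_pnat_eq_tsum_of_eq_zero (h₂ _)]
  exact tsum_pnat_eq_tsum_of_eq_zero (f := fun n => ∑' m, F n m) (by simp [h₁])

end Summation

section BlockMaxima

variable {Ω 𝕜 : Type*} [MeasurableSpace Ω] {μ : Measure Ω} [RCLike 𝕜]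

theorem tsum_lintegral_sq_dyadicBlockMax_le (Y : ℕ → Ω → 𝕜)
    (hY : ∀ n, 1 ≤ n → MemLp (Y n) 2 μ) :
    ∑' k, ∫⁻ ω, ENNReal.ofReal (dyadicBlockMax (Y · ω) k ^ 2) ∂μ ≤
      4 * ∑' (n) (m), ENNReal.ofReal (‖∫ ω, Y n ω * conj (Y m ω) ∂μ‖ *
        Real.logb 2 (n + 1) * Real.logb 2 (m + 1)) := by
  set w : ℕ × ℕ → ℝ≥0∞ := fun p => ENNReal.ofReal (‖∫ ω, Y p.1 ω * conj (Y p.2 ω) ∂μ‖ *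
    Real.logb 2 (p.1 + 1) * Real.logb 2 (p.2 + 1))
  have hblock : ∀ k, ∫⁻ ω, ENNReal.ofReal (dyadicBlockMax (Y · ω) k ^ 2) ∂μ ≤
      ∑ p ∈ Ico (2 ^ k) (2 ^ (k + 1)) ×ˢ Ico (2 ^ k) (2 ^ (k + 1)), 4 * w p := by
    intro k
    refine (lintegral_sq_dyadicBlockMax_le Y k fun n hn =>
      hY n (Nat.one_le_two_pow.trans (mem_Ico.mp hn).1)).trans ?_
    rw [crossMomentSum, ← sum_product', mul_sum, ENNReal.ofReal_sum_of_nonneg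
      fun _ _ => by positivity]
    refine sum_le_sum fun p hp => ?_
    rw [mem_product, mem_Ico, mem_Ico] at hp
    have hn := add_one_le_two_mul_logb hp.1.1
    have hm := add_one_le_two_mul_logb hp.2.1
    rw [← ENNReal.ofReal_ofNat 4, ← ENNReal.ofReal_mul zero_le_four]
    refine ENNReal.ofReal_le_ofReal ?_
    have hsq : ((k : ℝ) + 1) ^ 2 ≤ 4 * (Real.logb 2 (p.1 + 1) * Real.logb 2 (p.2 + 1)) := by
      nlinarith
    calc ((k : ℝ) + 1) ^ 2 * ‖∫ ω, Y p.1 ω * conj (Y p.2 ω) ∂μ‖ ≤ _ :=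
          mul_le_mul_of_nonneg_right hsq (norm_nonneg _)
      _ = _ := by ring
  calc ∑' k, ∫⁻ ω, ENNReal.ofReal (dyadicBlockMax (Y · ω) k ^ 2) ∂μ
      ≤ ∑' k, ∑ p ∈ Ico (2 ^ k) (2 ^ (k + 1)) ×ˢ Ico (2 ^ k) (2 ^ (k + 1)), 4 * w p :=
        ENNReal.tsum_le_tsum hblock
    _ ≤ ∑' p, 4 * w p := ENNReal.tsum_sum_le_tsum_of_pairwise_disjoint _
        fun k l hkl => disjoint_product.mpr (Or.inl (pairwise_disjoint_Ico_two_pow hkl))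
    _ = _ := by rw [ENNReal.tsum_mul_left, ENNReal.tsum_prod']

lemma ae_tendsto_zero_of_tsum_lintegral_ne_top {f : ℕ → Ω → ℝ≥0∞}
    (hf : ∀ k, AEMeasurable (f k) μ) (h : ∑' k, ∫⁻ ω, f k ω ∂μ ≠ ∞) :
    ∀ᵐ ω ∂μ, Tendsto (fun k => f k ω) atTop (𝓝 0) := by
  rw [← lintegral_tsum hf] at h
  filter_upwards [ae_lt_top' (AEMeasurable.tsum hf) h] with ω hω
  exact ENNReal.tendsto_atTop_zero_of_tsum_ne_top hω.ne

lemma tendsto_zero_of_tendsto_ofReal_sq {g : ℕ → ℝ} (hg : ∀ k, 0 ≤ g k)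
    (h : Tendsto (fun k => ENNReal.ofReal (g k ^ 2)) atTop (𝓝 0)) : Tendsto g atTop (𝓝 0) := by
  have hsq := ((ENNReal.tendsto_toReal ENNReal.zero_ne_top).comp h).sqrt
  simpa [Function.comp_def, ENNReal.toReal_ofReal (sq_nonneg _), Real.sqrt_sq (hg _)] using hsq

theorem ae_tendsto_dyadicBlockMax_zero (Y : ℕ → Ω → 𝕜)
    (hY : ∀ n, 1 ≤ n → AEMeasurable (Y n) μ)
    (h : ∑' k, ∫⁻ ω, ENNReal.ofReal (dyadicBlockMax (Y · ω) k ^ 2) ∂μ ≠ ∞) :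
    ∀ᵐ ω ∂μ, Tendsto (fun k => dyadicBlockMax (Y · ω) k) atTop (𝓝 0) := by
  have hmeas : ∀ k, AEMeasurable (fun ω => ENNReal.ofReal (dyadicBlockMax (Y · ω) k ^ 2)) μ :=
    fun k => ((aemeasurable_dyadicBlockMax Y k fun n hn =>
      hY n (Nat.one_le_two_pow.trans (mem_Ico.mp hn).1)).pow_const 2).ennreal_ofReal
  filter_upwards [ae_tendsto_zero_of_tsum_lintegral_ne_top hmeas h] with ω hω
  exact tendsto_zero_of_tendsto_ofReal_sq (fun k => dyadicBlockMax_nonneg _ k) hω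

/-- The Bochner integral of a non-integrable function is `0`. -/
lemma memLp_two_of_integral_sq_norm_ne_zero {f : Ω → 𝕜} (hf : AEMeasurable f μ)
    (h : ∫ ω, ‖f ω‖ ^ 2 ∂μ ≠ 0) : MemLp f 2 μ :=
  (memLp_two_iff_integrable_sq_norm hf.aestronglyMeasurable).mpr (Integrable.of_integral_ne_zero h)

lemma norm_integral_mul_mul_conj_mul (c d : 𝕜) (f g : Ω → 𝕜) :
    ‖∫ ω, c * f ω * conj (d * g ω) ∂μ‖ = ‖c‖ * ‖d‖ * ‖∫ ω, f ω * conj (g ω) ∂μ‖ := by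
  have h : ∀ ω, c * f ω * conj (d * g ω) = c * conj d * (f ω * conj (g ω)) := fun ω => by
    rw [map_mul]; ring
  simp_rw [h, integral_const_mul, norm_mul, RCLike.norm_conj]

end BlockMaxima

theorem block_maxima_tend_to_zero_general
    {Ω : Type*} [MeasurableSpace Ω] (P : Measure Ω)
    (a : ℕ → ℂ) (X : ℕ → Ω → ℂ)
    (hmeas : ∀ n, 1 ≤ n → AEMeasurable (X n) P)
    (hnorm : ∀ n, 1 ≤ n → ∫ ω, ‖X n ω‖ ^ 2 ∂P = 1)
    (L : ℝ≥0∞)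
    (hLdef : L = ∑' (n : ℕ+) (m : ℕ+),
      ENNReal.ofReal (‖a n‖ * ‖a m‖ * ‖∫ ω, X n ω * (starRingEnd ℂ) (X m ω) ∂P‖ *
        Real.logb 2 ((n : ℕ) + 1) * Real.logb 2 ((m : ℕ) + 1)))
    (hL : L < ⊤) :
    (∑' k : ℕ, ∫⁻ ω, ENNReal.ofReal
        (((Finset.Ico (2 ^ k) (2 ^ (k + 1))).sup'
            (Finset.nonempty_Ico.mpr (Nat.pow_lt_pow_succ one_lt_two))
            (fun j => ‖∑ n ∈ Finset.Icc (2 ^ k) j, a n * X n ω‖)) ^ 2) ∂P) ≤ 4 * L ∧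
      ∀ᵐ ω ∂P, Tendsto (fun k : ℕ =>
          (Finset.Ico (2 ^ k) (2 ^ (k + 1))).sup'
            (Finset.nonempty_Ico.mpr (Nat.pow_lt_pow_succ one_lt_two))
            (fun j => ‖∑ n ∈ Finset.Icc (2 ^ k) j, a n * X n ω‖))
        atTop (nhds 0) := by
  have hY : ∀ n, 1 ≤ n → MemLp (fun ω => a n * X n ω) 2 P := fun n hn =>
    (memLp_two_of_integral_sq_norm_ne_zero (hmeas n hn) (by simp [hnorm n hn])).const_mul (a n)
  have hsum : ∑' k, ∫⁻ ω, ENNReal.ofReal (dyadicBlockMax (fun n => a n * X n ω) k ^ 2) ∂P ≤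
      4 * L := by
    refine (tsum_lintegral_sq_dyadicBlockMax_le _ hY).trans_eq ?_
    simp_rw [norm_integral_mul_mul_conj_mul, hLdef]
    -- the terms with `n = 0` or `m = 0` vanish because `logb 2 1 = 0`
    exact congrArg _ (tsum_tsum_pnat_eq_of_eq_zero _ (fun m => by simp) (fun n => by simp)).symm
  exact ⟨hsum, ae_tendsto_dyadicBlockMax_zero _ (fun n hn => (hY n hn).aemeasurable)
    (ne_top_of_le_ne_top (ENNReal.mul_ne_top ENNReal.ofNat_ne_top hL.ne) hsum)⟩

/-- Under the Menshov–Rademacher type condition `L < ∞`, the block maxima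
`S°_k = max_{2^k ≤ j < 2^{k+1}} |Σ_{n=2^k}^j a_n X_n|` satisfy
`Σ_k E((S°_k)²) ≤ 4 L` and `S°_k → 0` almost surely. -/
theorem block_maxima_tend_to_zero
    {Ω : Type*} [MeasurableSpace Ω] (P : Measure Ω) [IsProbabilityMeasure P]
    (a : ℕ → ℂ) (X : ℕ → Ω → ℂ)
    (hmeas : ∀ n, 1 ≤ n → AEMeasurable (X n) P)
    (hnorm : ∀ n, 1 ≤ n → ∫ ω, ‖X n ω‖ ^ 2 ∂P = 1)
    (L : ℝ≥0∞)
    (hLdef : L = ∑' (n : ℕ+) (m : ℕ+),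
      ENNReal.ofReal (‖a n‖ * ‖a m‖ * ‖∫ ω, X n ω * (starRingEnd ℂ) (X m ω) ∂P‖ *
        Real.logb 2 ((n : ℕ) + 1) * Real.logb 2 ((m : ℕ) + 1)))
    (hL : L < ⊤) :
    (∑' k : ℕ, ∫⁻ ω, ENNReal.ofReal
        (((Finset.Ico (2 ^ k) (2 ^ (k + 1))).sup'
            (Finset.nonempty_Ico.mpr (Nat.pow_lt_pow_succ one_lt_two))
            (fun j => ‖∑ n ∈ Finset.Icc (2 ^ k) j, a n * X n ω‖)) ^ 2) ∂P) ≤ 4 * L ∧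
      ∀ᵐ ω ∂P, Tendsto (fun k : ℕ =>
          (Finset.Ico (2 ^ k) (2 ^ (k + 1))).sup'
            (Finset.nonempty_Ico.mpr (Nat.pow_lt_pow_succ one_lt_two))
            (fun j => ‖∑ n ∈ Finset.Icc (2 ^ k) j, a n * X n ω‖))
        atTop (nhds 0) :=
  block_maxima_tend_to_zero_general P a X hmeas hnorm L hLdef hL
end
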